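/- arXiv:1212.5443 — 6 statements merged into one kernel-verified Lean document; each statement's English description precedes it below -/
import Mathlib

section
/- Let a and a' be nonnegative integer n-tuples with equal sums such that a is nonincreasing and a is majorized by a' (i.e., all partial sums of a are at most the corresponding partial sums of a'). Then a can be obtained from a' by exactly κ = (1/2)·Σ_{j=1}^n |a'_j − a_j| successive unit transfers, where a unit (i,j)-transfer applied to a list x with x_i ≥ x_j + 2 replaces x by x − e_i + e_j. -/
open Finset

/-- Partial sum of the first `k` entries of `a`. -/
def partSum {n : ℕ} (a : Fin n → ℕ) (k : ℕ) : ℕ :=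
  ∑ i : Fin n, if (i : ℕ) < k then a i else 0

/-- `a ≺ a'` : `a` is majorized by `a'`. -/
def Majorized {n : ℕ} (a a' : Fin n → ℕ) : Prop :=
  (∀ k : ℕ, partSum a k ≤ partSum a' k) ∧ ∑ i, a i = ∑ i, a' i

/-- `a` is nonincreasing. -/
def Nonincreasing {n : ℕ} (a : Fin n → ℕ) : Prop :=
  ∀ i j : Fin n, i ≤ j → a j ≤ a i

/-- `b` is nondecreasing. -/
def Nondecreasing {n : ℕ} (b : Fin n → ℕ) : Prop :=
  ∀ i j : Fin n, i ≤ j → b i ≤ b j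

/-- `a` is obtained from `a'` by a unit `(i,j)`-transfer. -/
def UnitTransfer {n : ℕ} (a' a : Fin n → ℕ) (i j : Fin n) : Prop :=
  i < j ∧ a' j + 2 ≤ a' i ∧
  a = Function.update (Function.update a' i (a' i - 1)) j (a' j + 1)

/-- Row sum of a 0-1 matrix. -/
def rowSum {n : ℕ} (M : Fin n → Fin n → Bool) (i : Fin n) : ℕ :=
  ∑ j, if M i j then 1 else 0

/-- Column sum of a 0-1 matrix. -/
def colSum {n : ℕ} (M : Fin n → Fin n → Bool) (j : Fin n) : ℕ :=
  ∑ i, if M i j then 1 else 0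

/-- Number of loop-digraph realizations of `(a,b)`:
`n×n` 0-1 matrices with row sums `b` and column sums `a`. -/
noncomputable def N1 {n : ℕ} (a b : Fin n → ℕ) : ℕ :=
  Nat.card {M : Fin n → Fin n → Bool //
    (∀ i, rowSum M i = b i) ∧ (∀ j, colSum M j = a j)}

def LoopDigraphic {n : ℕ} (a b : Fin n → ℕ) : Prop := 0 < N1 a b

/-- Number of digraph realizations of `(a,b)`:
`n×n` 0-1 matrices with zero diagonal, row sums `b` and column sums `a`. -/
noncomputable def N2 {n : ℕ} (a b : Fin n → ℕ) : ℕ :=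
  Nat.card {M : Fin n → Fin n → Bool //
    (∀ i, M i i = false) ∧ (∀ i, rowSum M i = b i) ∧ (∀ j, colSum M j = a j)}

def Digraphic {n : ℕ} (a b : Fin n → ℕ) : Prop := 0 < N2 a b

/-- Number of simple graph realizations of `a` (symmetric 0-1 adjacency matrices
with zero diagonal and degrees `a`). -/
noncomputable def N3 {n : ℕ} (a : Fin n → ℕ) : ℕ :=
  Nat.card {M : Fin n → Fin n → Bool //
    (∀ i j, M i j = M j i) ∧ (∀ i, M i i = false) ∧ (∀ i, rowSum M i = a i)}

def Graphic {n : ℕ} (a : Fin n → ℕ) : Prop := 0 < N3 a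

/-- The minconvex list for parameters `n, m`. -/
def minconvex (n m : ℕ) : Fin n → ℕ :=
  fun i => if (i : ℕ) < m % n then m / n + 1 else m / n

/-- `(a,b)` is lexicographically nonincreasing. -/
def LexNonincreasing {n : ℕ} (a b : Fin n → ℕ) : Prop :=
  ∀ i j : Fin n, i ≤ j → (a j < a i ∨ (a i = a j ∧ b j ≤ b i))


section Aux
variable {n : ℕ}

lemma partSum_all (a : Fin n → ℕ) : partSum a n = ∑ i, a i :=
  Finset.sum_congr rfl fun i _ => if_pos i.isLt

lemma ind_sum (c : Fin n) (k x : ℕ) :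
    (∑ i : Fin n, if (i : ℕ) < k then (if i = c then x else 0) else 0)
      = if (c : ℕ) < k then x else 0 := by
  rw [show (∑ i : Fin n, if (i : ℕ) < k then (if i = c then x else 0) else 0)
      = ∑ i : Fin n, if i = c then (if (c : ℕ) < k then x else 0) else 0 from
    Finset.sum_congr rfl fun i _ => by
      by_cases h : i = c
      · subst h; split_ifs <;> rfl
      · simp [h]]
  simp [Finset.sum_ite_eq']

lemma split_sum (f g : Fin n → ℕ) (k : ℕ) :
    (∑ i : Fin n, if (i : ℕ) < k then (f i + g i) else 0)
      = (∑ i : Fin n, if (i : ℕ) < k then f i else 0)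
        + (∑ i : Fin n, if (i : ℕ) < k then g i else 0) := by
  rw [← Finset.sum_add_distrib]
  exact Finset.sum_congr rfl fun i _ => by split_ifs <;> simp

lemma partSum_succ (a : Fin n → ℕ) (k : ℕ) (hk : k < n) :
    partSum a (k + 1) = partSum a k + a ⟨k, hk⟩ := by
  unfold partSum
  rw [show (∑ i : Fin n, if (i : ℕ) < k + 1 then a i else 0)
      = ∑ i : Fin n, ((if (i : ℕ) < k then a i else 0)
          + (if i = (⟨k, hk⟩ : Fin n) then a i else 0)) from
    Finset.sum_congr rfl fun i _ => by
      by_cases h : i = (⟨k, hk⟩ : Fin n)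
      · subst h; simp
      · have hne : (i : ℕ) ≠ k := fun hc => h (Fin.ext hc)
        have hiff : ((i : ℕ) < k + 1) ↔ ((i : ℕ) < k) := by omega
        simp [h, hiff]]
  rw [Finset.sum_add_distrib]
  simp [Finset.sum_ite_eq']

lemma partSum_congr {a a' : Fin n → ℕ} {k : ℕ}
    (h : ∀ l : Fin n, (l : ℕ) < k → a l = a' l) : partSum a k = partSum a' k :=
  Finset.sum_congr rfl fun i _ => by
    by_cases hi : (i : ℕ) < k
    · simp [hi, h i hi]
    · simp [hi]

lemma partSum_lt {a a' : Fin n → ℕ} {k : ℕ} {i : Fin n}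
    (hle : ∀ l : Fin n, (l : ℕ) < k → a l ≤ a' l)
    (hik : (i : ℕ) < k) (hstrict : a i < a' i) : partSum a k < partSum a' k := by
  apply Finset.sum_lt_sum (fun l _ => ?_) ⟨i, Finset.mem_univ i, by simp [hik, hstrict]⟩
  by_cases hl : (l : ℕ) < k
  · simp [hl]; exact hle l hl
  · simp [hl]

lemma step_lemma (a a' : Fin n → ℕ) (hmono : Nonincreasing a) (hmaj : Majorized a a')
    (hne : a ≠ a') :
    ∃ a'' : Fin n → ℕ, ∃ i j : Fin n, UnitTransfer a' a'' i j ∧ Majorized a a'' ∧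
      (∑ l, ((a'' l : ℤ) - (a l : ℤ)).natAbs) + 2 = ∑ l, ((a' l : ℤ) - (a l : ℤ)).natAbs := by
  classical
  -- i : first index where a and a' differ
  have hsI : (univ.filter (fun l : Fin n => a l ≠ a' l)).Nonempty := by
    by_contra h
    apply hne
    funext l
    by_contra hl
    exact h ⟨l, by simp [hl]⟩
  set i : Fin n := (univ.filter (fun l : Fin n => a l ≠ a' l)).min' hsI with hi_def
  have hi_mem : a i ≠ a' i := by
    have := Finset.min'_mem _ hsI
    simpa using this
  have hi_min : ∀ l : Fin n, (l : ℕ) < (i : ℕ) → a l = a' l := by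
    intro l hl
    by_contra hc
    have := Finset.min'_le (univ.filter (fun l : Fin n => a l ≠ a' l)) l (by simp only [Finset.mem_filter, Finset.mem_univ, true_and]; exact hc)
    rw [← hi_def] at this
    exact absurd (lt_of_lt_of_le hl this) (lt_irrefl _)
  -- a i < a' i
  have hi_lt : a i < a' i := by
    refine lt_of_le_of_ne ?_ hi_mem
    have h1 : partSum a (i : ℕ) = partSum a' (i : ℕ) := partSum_congr hi_min
    have h2 : partSum a ((i : ℕ) + 1) ≤ partSum a' ((i : ℕ) + 1) := hmaj.1 _
    rw [partSum_succ a _ i.isLt, partSum_succ a' _ i.isLt, h1] at h2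
    simpa using h2
  -- j : first index where a' < a
  have hsJ : (univ.filter (fun l : Fin n => a' l < a l)).Nonempty := by
    by_contra h
    have hall : ∀ l : Fin n, a l ≤ a' l := by
      intro l
      by_contra hc
      exact h ⟨l, by simp only [Finset.mem_filter, Finset.mem_univ, true_and]; omega⟩
    have := Finset.sum_lt_sum (fun l _ => hall l) ⟨i, Finset.mem_univ i, hi_lt⟩
    exact absurd hmaj.2 (ne_of_lt this)
  set j : Fin n := (univ.filter (fun l : Fin n => a' l < a l)).min' hsJ with hj_def
  have hj_mem : a' j < a j := by
    have := Finset.min'_mem _ hsJ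
    simpa using this
  have hj_min : ∀ l : Fin n, (l : ℕ) < (j : ℕ) → a l ≤ a' l := by
    intro l hl
    by_contra hc
    have hmem : l ∈ univ.filter (fun l : Fin n => a' l < a l) := by
      simp only [Finset.mem_filter, Finset.mem_univ, true_and]; omega
    have := Finset.min'_le (univ.filter (fun l : Fin n => a' l < a l)) l hmem
    rw [← hj_def] at this
    exact absurd (lt_of_lt_of_le hl this) (lt_irrefl _)
  -- i < j
  have hij : i < j := by
    rcases lt_trichotomy (i : ℕ) (j : ℕ) with h | h | h
    · exact h
    · exact absurd (Fin.ext h ▸ hj_mem) (by omega)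
    · exact absurd (hi_min j h) (by omega)
  have hijne : i ≠ j := ne_of_lt hij
  -- transfer condition
  have htrans : a' j + 2 ≤ a' i := by
    have h1 : a j ≤ a i := hmono i j (le_of_lt hij)
    omega
  set a'' : Fin n → ℕ :=
    Function.update (Function.update a' i (a' i - 1)) j (a' j + 1) with ha''_def
  have ha''_i : a'' i = a' i - 1 := by
    simp [ha''_def, Function.update, hijne, (hijne.symm : j ≠ i)]
  have ha''_j : a'' j = a' j + 1 := by simp [ha''_def, Function.update]
  have ha''_other : ∀ l : Fin n, l ≠ i → l ≠ j → a'' l = a' l := by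
    intro l hli hlj
    simp [ha''_def, Function.update, hli, hlj]
  have hpos : 1 ≤ a' i := by omega
  -- Claim A : key partial-sum identity
  have claimA : ∀ k : ℕ, partSum a'' k + (if (i : ℕ) < k then 1 else 0)
      = partSum a' k + (if (j : ℕ) < k then 1 else 0) := by
    intro k
    have point : ∀ l : Fin n, a'' l + (if l = i then 1 else 0)
        = a' l + (if l = j then 1 else 0) := by
      intro l
      by_cases hli : l = i
      · subst hli; simp [ha''_i, hijne]; omega
      · by_cases hlj : l = j
        · subst hlj; simp [ha''_j, (hijne.symm : j ≠ i)]
        · simp [ha''_other l hli hlj, hli, hlj]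
    calc partSum a'' k + (if (i : ℕ) < k then 1 else 0)
        = (∑ l : Fin n, if (l : ℕ) < k then (a'' l + (if l = i then 1 else 0)) else 0) := by
          rw [split_sum, ind_sum]; rfl
      _ = (∑ l : Fin n, if (l : ℕ) < k then (a' l + (if l = j then 1 else 0)) else 0) :=
          Finset.sum_congr rfl fun l _ => by rw [point l]
      _ = partSum a' k + (if (j : ℕ) < k then 1 else 0) := by
          rw [split_sum, ind_sum]; rfl
  -- sums equal
  have hsum'' : ∑ l, a'' l = ∑ l, a' l := by
    have := claimA n
    rw [partSum_all, partSum_all] at this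
    simp [i.isLt, j.isLt] at this
    omega
  refine ⟨a'', i, j, ⟨hij, htrans, ha''_def⟩, ⟨?_, hmaj.2.trans hsum''.symm⟩, ?_⟩
  · -- partial sums
    intro k
    have hA := claimA k
    by_cases hik : (i : ℕ) < k
    · by_cases hjk : (j : ℕ) < k
      · simp [hik, hjk] at hA
        have := hmaj.1 k
        omega
      · -- i < k ≤ j : strict inequality
        simp [hik, hjk] at hA
        have hstrict : partSum a k < partSum a' k := by
          apply partSum_lt (i := i) _ hik hi_lt
          intro l hl
          exact hj_min l (by omega)
        omega
    · have hjk : ¬ (j : ℕ) < k := by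
        have : (i : ℕ) < (j : ℕ) := hij
        omega
      simp [hik, hjk] at hA
      have := hmaj.1 k
      omega
  · -- natAbs sum drops by 2
    have point : ∀ l : Fin n, ((a'' l : ℤ) - (a l : ℤ)).natAbs
        + (if l = i then 1 else 0) + (if l = j then 1 else 0)
        = ((a' l : ℤ) - (a l : ℤ)).natAbs := by
      intro l
      by_cases hli : l = i
      · subst hli; simp [ha''_i, hijne]; omega
      · by_cases hlj : l = j
        · subst hlj; simp [ha''_j, (hijne.symm : j ≠ i)]; omega
        · simp [ha''_other l hli hlj, hli, hlj]
    calc (∑ l, ((a'' l : ℤ) - (a l : ℤ)).natAbs) + 2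
        = ∑ l : Fin n, (((a'' l : ℤ) - (a l : ℤ)).natAbs
            + (if l = i then 1 else 0) + (if l = j then 1 else 0)) := by
          rw [Finset.sum_add_distrib, Finset.sum_add_distrib]
          simp [Finset.sum_ite_eq']
      _ = ∑ l, ((a' l : ℤ) - (a l : ℤ)).natAbs :=
          Finset.sum_congr rfl fun l _ => point l


lemma chain_lemma {n : ℕ} : ∀ κ : ℕ, ∀ a a' : Fin n → ℕ,
    Nonincreasing a → Majorized a a' →
    2 * κ = (∑ j, ((a' j : ℤ) - (a j : ℤ)).natAbs) →
    ∃ c : ℕ → Fin n → ℕ, c 0 = a' ∧ c κ = a ∧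
      ∀ t < κ, ∃ i j : Fin n, UnitTransfer (c t) (c (t + 1)) i j := by
  intro κ
  induction κ with
  | zero =>
    intro a a' hmono hmaj hκ
    have : ∀ l : Fin n, ((a' l : ℤ) - (a l : ℤ)).natAbs = 0 := by
      intro l
      have h0 : (∑ j, ((a' j : ℤ) - (a j : ℤ)).natAbs) = 0 := by omega
      exact Finset.sum_eq_zero_iff.mp h0 l (Finset.mem_univ l)
    have heq : a' = a := by
      funext l
      have := this l
      omega
    exact ⟨fun _ => a, by rw [heq], rfl, fun t ht => absurd ht (by omega)⟩
  | succ κ ih =>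
    intro a a' hmono hmaj hκ
    have hne : a ≠ a' := by
      intro h
      subst h
      simp at hκ
    obtain ⟨a'', i, j, htr, hmaj'', hdrop⟩ := step_lemma a a' hmono hmaj hne
    obtain ⟨c', hc0, hcκ, hcstep⟩ := ih a a'' hmono hmaj'' (by omega)
    refine ⟨fun t => if t = 0 then a' else c' (t - 1), rfl, by simp [hcκ], ?_⟩
    intro t ht
    rcases Nat.eq_zero_or_pos t with h0 | h0
    · subst h0
      exact ⟨i, j, by simpa [hc0] using htr⟩
    · obtain ⟨i', j', h'⟩ := hcstep (t - 1) (by omega)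
      refine ⟨i', j', ?_⟩
      have h1 : t ≠ 0 := by omega
      have h2 : t + 1 ≠ 0 := by omega
      simpa [h1, h2, show t - 1 + 1 = t from by omega, show t + 1 - 1 = t from rfl] using h'


theorem stmt0 {n : ℕ} (a a' : Fin n → ℕ) (κ : ℕ)
    (hmono : Nonincreasing a) (hmaj : Majorized a a')
    (hκ : 2 * κ = ∑ j, ((a' j : ℤ) - (a j : ℤ)).natAbs) :
    ∃ c : ℕ → Fin n → ℕ, c 0 = a' ∧ c κ = a ∧
      ∀ t < κ, ∃ i j : Fin n, UnitTransfer (c t) (c (t + 1)) i j := by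
  exact chain_lemma κ a a' hmono hmaj hκ
end Aux
end

section
/- If a and a' are nonnegative integer n-tuples with equal sums, a is nonincreasing, a ≺ a', and a ≠ a', then there exist indices ℓ < k with a'_ℓ > a_ℓ, a'_k < a_k, a'_ℓ ≥ a'_k + 2, and the list a'' = a' − e_ℓ + e_k satisfies a ≺ a'' ≺ a' and (1/2)·Σ_j |a''_j − a_j| = (1/2)·Σ_j |a'_j − a_j| − 1. -/
open Finset

lemma partSum_update {n : ℕ} (v : Fin n → ℕ) (j : Fin n) (c m : ℕ) :
    partSum (Function.update v j c) m + (if (j : ℕ) < m then v j else 0)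
      = partSum v m + (if (j : ℕ) < m then c else 0) := by
  unfold partSum
  have h : (fun i : Fin n => if (i : ℕ) < m then Function.update v j c i else 0)
      = Function.update (fun i : Fin n => if (i : ℕ) < m then v i else 0) j
          (if (j : ℕ) < m then c else 0) := by
    funext i
    rcases eq_or_ne i j with rfl | hne
    · simp
    · simp [Function.update_of_ne hne]
  rw [h, Finset.sum_update_of_mem (Finset.mem_univ j),
    Finset.sum_eq_sum_sdiff_singleton_add (Finset.mem_univ j)
      (fun i : Fin n => if (i : ℕ) < m then v i else 0)]
  ring

lemma partSum_top {n : ℕ} (v : Fin n → ℕ) : partSum v n = ∑ i, v i := by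
  unfold partSum
  exact Finset.sum_congr rfl (fun i _ => by simp [i.isLt])

theorem stmt1 {n : ℕ} (a a' : Fin n → ℕ)
    (hmono : Nonincreasing a) (hmaj : Majorized a a') (hne : a ≠ a') :
    ∃ l k : Fin n, l < k ∧ a l < a' l ∧ a' k < a k ∧ a' k + 2 ≤ a' l ∧
      Majorized a (Function.update (Function.update a' l (a' l - 1)) k (a' k + 1)) ∧
      Majorized (Function.update (Function.update a' l (a' l - 1)) k (a' k + 1)) a' ∧
      (∑ j, (((Function.update (Function.update a' l (a' l - 1)) k (a' k + 1)) j : ℤ)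
          - (a j : ℤ)).natAbs) + 2
        = ∑ j, ((a' j : ℤ) - (a j : ℤ)).natAbs := by
  classical
  -- the first index where a and a' differ
  have hSne : (Finset.univ.filter (fun i : Fin n => a i ≠ a' i)).Nonempty := by
    rcases Function.ne_iff.mp hne with ⟨i, hi⟩
    exact ⟨i, by simp [hi]⟩
  set l := (Finset.univ.filter (fun i : Fin n => a i ≠ a' i)).min' hSne with hl
  have hlne : a l ≠ a' l := by
    have := Finset.min'_mem _ hSne
    simpa using (Finset.mem_filter.mp this).2
  have hlmin : ∀ i : Fin n, i < l → a i = a' i := by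
    intro i hi
    by_contra h
    have hle := Finset.min'_le (Finset.univ.filter (fun i : Fin n => a i ≠ a' i)) i
      (Finset.mem_filter.mpr ⟨Finset.mem_univ i, h⟩)
    rw [← hl] at hle
    exact absurd hle (not_le.mpr hi)
  have hal : a l < a' l := by
    rcases lt_or_ge (a l) (a' l) with h | h
    · exact h
    have hlt : a' l < a l := lt_of_le_of_ne h (Ne.symm hlne)
    have hstep : ∀ i : Fin n, i ∈ Finset.univ →
        (if (i : ℕ) < (l : ℕ) + 1 then a' i else 0)
          ≤ (if (i : ℕ) < (l : ℕ) + 1 then a i else 0) := by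
      intro i _
      by_cases hi : (i : ℕ) < (l : ℕ) + 1
      · simp only [if_pos hi]
        rcases lt_or_eq_of_le (Nat.lt_succ_iff.mp hi) with h' | h'
        · rw [hlmin i (Fin.lt_def.mpr h')]
        · have : i = l := Fin.ext h'
          subst this
          exact le_of_lt hlt
      · simp [hi]
    have hstrict : partSum a' ((l : ℕ) + 1) < partSum a ((l : ℕ) + 1) := by
      unfold partSum
      refine Finset.sum_lt_sum hstep ⟨l, Finset.mem_univ l, ?_⟩
      simp [hlt]
    exact absurd (hmaj.1 ((l : ℕ) + 1)) (not_le.mpr hstrict)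
  -- the first index where a' < a
  have hTne : (Finset.univ.filter (fun i : Fin n => a' i < a i)).Nonempty := by
    by_contra hT
    have hall : ∀ i : Fin n, a i ≤ a' i := by
      intro i
      by_contra h
      exact hT ⟨i, Finset.mem_filter.mpr ⟨Finset.mem_univ i, lt_of_not_ge h⟩⟩
    have : ∑ i, a i < ∑ i, a' i :=
      Finset.sum_lt_sum (fun i _ => hall i) ⟨l, Finset.mem_univ l, hal⟩
    have h2 := hmaj.2
    omega
  set k := (Finset.univ.filter (fun i : Fin n => a' i < a i)).min' hTne with hkdef
  have hk : a' k < a k := by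
    have := Finset.min'_mem _ hTne
    simpa using (Finset.mem_filter.mp this).2
  have hkmin : ∀ i : Fin n, (i : ℕ) < (k : ℕ) → a i ≤ a' i := by
    intro i hi
    by_contra h
    have hle := Finset.min'_le (Finset.univ.filter (fun i : Fin n => a' i < a i)) i
      (Finset.mem_filter.mpr ⟨Finset.mem_univ i, lt_of_not_ge h⟩)
    rw [← hkdef] at hle
    exact absurd (Fin.le_def.mp hle) (not_le.mpr hi)
  have hlk : l < k := by
    rcases lt_trichotomy l k with h | h | h
    · exact h
    · exfalso; have h' := hal; rw [h] at h'; omega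
    · have := hlmin k h; omega
  have hlk' : (l : ℕ) < (k : ℕ) := Fin.lt_def.mp hlk
  have hak : a k ≤ a l := hmono l k (le_of_lt hlk)
  have h2le : a' k + 2 ≤ a' l := by omega
  -- the transfer vector
  set a'' := Function.update (Function.update a' l (a' l - 1)) k (a' k + 1) with hA
  have hpos : 1 ≤ a' l := by omega
  have h1 : ∀ m, partSum (Function.update a' l (a' l - 1)) m
      + (if (l : ℕ) < m then 1 else 0) = partSum a' m := by
    intro m
    have h := partSum_update a' l (a' l - 1) m
    by_cases hm : (l : ℕ) < m
    · simp only [if_pos hm] at h ⊢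
      omega
    · simp only [if_neg hm] at h ⊢
      omega
  have h2 : ∀ m, partSum a'' m = partSum (Function.update a' l (a' l - 1)) m
      + (if (k : ℕ) < m then 1 else 0) := by
    intro m
    have h := partSum_update (Function.update a' l (a' l - 1)) k (a' k + 1) m
    have hbk : Function.update a' l (a' l - 1) k = a' k :=
      Function.update_of_ne hlk.ne' _ _
    rw [hbk, ← hA] at h
    by_cases hm : (k : ℕ) < m
    · simp only [if_pos hm] at h ⊢
      omega
    · simp only [if_neg hm] at h ⊢
      omega
  have h3 : ∀ m, partSum a'' m + (if (l : ℕ) < m then 1 else 0)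
      = partSum a' m + (if (k : ℕ) < m then 1 else 0) := by
    intro m
    have := h1 m
    have := h2 m
    omega
  have hstrict : ∀ m : ℕ, m ≤ (k : ℕ) → (l : ℕ) < m →
      partSum a m + 1 ≤ partSum a' m := by
    intro m hmk hlm
    have step : ∀ i : Fin n, i ∈ Finset.univ →
        (if (i : ℕ) < m then a i else 0) + (if i = l then 1 else 0)
          ≤ (if (i : ℕ) < m then a' i else 0) := by
      intro i _
      rcases eq_or_ne i l with rfl | hil
      · simp [hlm]
        omega
      · simp only [if_neg hil, add_zero]
        by_cases him : (i : ℕ) < m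
        · simp only [if_pos him]
          exact hkmin i (lt_of_lt_of_le him hmk)
        · simp [him]
    have hsum := Finset.sum_le_sum step
    rw [Finset.sum_add_distrib] at hsum
    have hind : (∑ i : Fin n, if i = l then 1 else 0) = 1 := by simp
    rw [hind] at hsum
    exact hsum
  have hsum'' : ∑ i, a'' i = ∑ i, a' i := by
    have h := h3 n
    rw [partSum_top, partSum_top, if_pos l.isLt, if_pos k.isLt] at h
    omega
  have hmaj1 : Majorized a a'' := by
    constructor
    · intro m
      have h3m := h3 m
      have hmajm := hmaj.1 m
      by_cases hkm : (k : ℕ) < m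
      · have hlm : (l : ℕ) < m := lt_trans hlk' hkm
        rw [if_pos hkm, if_pos hlm] at h3m
        omega
      · by_cases hlm : (l : ℕ) < m
        · have := hstrict m (by omega) hlm
          rw [if_neg hkm, if_pos hlm] at h3m
          omega
        · have : ¬ (k : ℕ) < m := hkm
          rw [if_neg hkm, if_neg hlm] at h3m
          omega
    · rw [hsum'']
      exact hmaj.2
  have hmaj2 : Majorized a'' a' := by
    constructor
    · intro m
      have h3m := h3 m
      by_cases hkm : (k : ℕ) < m
      · have hlm : (l : ℕ) < m := lt_trans hlk' hkm
        rw [if_pos hkm, if_pos hlm] at h3m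
        omega
      · by_cases hlm : (l : ℕ) < m
        · rw [if_neg hkm, if_pos hlm] at h3m
          omega
        · rw [if_neg hkm, if_neg hlm] at h3m
          omega
    · exact hsum''
  have habs : ∀ j : Fin n, ((a'' j : ℤ) - (a j : ℤ)).natAbs
      + ((if j = l then 1 else 0) + (if j = k then 1 else 0))
      = ((a' j : ℤ) - (a j : ℤ)).natAbs := by
    intro j
    rcases eq_or_ne j l with rfl | hjl
    · have hv : a'' l = a' l - 1 := by
        rw [hA, Function.update_of_ne hlk.ne, Function.update_self]
      rw [hv, if_pos rfl, if_neg hlk.ne]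
      omega
    rcases eq_or_ne j k with rfl | hjk
    · have hv : a'' k = a' k + 1 := by
        rw [hA, Function.update_self]
      rw [hv, if_neg hjl, if_pos rfl]
      omega
    · have hv : a'' j = a' j := by
        rw [hA, Function.update_of_ne hjk, Function.update_of_ne hjl]
      rw [hv, if_neg hjl, if_neg hjk]
      omega
  have hs := Finset.sum_congr rfl (fun j (_ : j ∈ Finset.univ) => habs j)
  rw [Finset.sum_add_distrib, Finset.sum_add_distrib] at hs
  have hil : (∑ j : Fin n, if j = l then 1 else 0) = 1 := by simp
  have hik : (∑ j : Fin n, if j = k then 1 else 0) = 1 := by simp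
  rw [hil, hik] at hs
  refine ⟨l, k, hlk, hal, hk, h2le, ?_, ?_, ?_⟩
  · rw [← hA]; exact hmaj1
  · rw [← hA]; exact hmaj2
  · rw [← hA]
    omega
end

section
/- Let (a,b) be a paired list of nonnegative integers with Σa_i = Σb_i and a nonincreasing with 0 ≤ a_i,b_i ≤ n. Let a'_i be the i-th column sum of the Ferrers matrix F defined by F_{ij}=1 iff j ≤ b_i (so a'_j = |{i : b_i ≥ j}| is the conjugate of b). Then (a,b) is loop-digraphic (i.e., there is an n×n 0-1 matrix with row sums b and column sums a) if and only if a ≺ a'. -/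
open Finset

set_option maxHeartbeats 1000000



section GaleRyserHelpers

variable {n : ℕ}

lemma card_filter_lt (m : ℕ) :
    ((univ : Finset (Fin n)).filter fun t : Fin n => (t : ℕ) < m).card = min m n := by
  rw [Finset.card_filter (fun t : Fin n => (t : ℕ) < m) univ]
  rw [Fin.sum_univ_eq_sum_range (fun t => if t < m then 1 else 0)]
  rw [← Finset.card_filter (fun t => t < m) (Finset.range n)]
  have : (Finset.range n).filter (fun x => x < m) = Finset.range (min m n) := by
    ext x; simp; omega
  rw [this, Finset.card_range]

lemma partSum_mono (f : Fin n → ℕ) {k l : ℕ} (h : k ≤ l) : partSum f k ≤ partSum f l := by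
  apply Finset.sum_le_sum
  intro i _
  by_cases h1 : (i : ℕ) < k
  · rw [if_pos h1, if_pos (lt_of_lt_of_le h1 h)]
  · simp [h1]

lemma partSum_of_ge (f : Fin n → ℕ) {k : ℕ} (h : n ≤ k) : partSum f k = ∑ i, f i :=
  Finset.sum_congr rfl fun i _ => if_pos (lt_of_lt_of_le i.2 h)

lemma partSum_succ_s5 (f : Fin n → ℕ) (k : ℕ) :
    partSum f (k + 1) = partSum f k + (if h : k < n then f ⟨k, h⟩ else 0) := by
  unfold partSum
  by_cases h : k < n
  · rw [dif_pos h]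
    have step : ∀ t : Fin n, (if (t : ℕ) < k + 1 then f t else 0)
        = (if (t : ℕ) < k then f t else 0) + (if t = ⟨k, h⟩ then f t else 0) := by
      intro t
      by_cases h2 : (t : ℕ) = k
      · have ht : t = ⟨k, h⟩ := Fin.ext h2
        subst ht
        simp
      · by_cases h1 : (t : ℕ) < k
        · rw [if_pos (by omega : (t : ℕ) < k + 1), if_pos h1,
              if_neg (fun he => h2 (by rw [he])), add_zero]
        · rw [if_neg (by omega), if_neg h1, if_neg (fun he => h2 (by rw [he])), add_zero]
    rw [Finset.sum_congr rfl (fun t _ => step t), Finset.sum_add_distrib,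
        Finset.sum_ite_eq' univ ⟨k, h⟩ f, if_pos (mem_univ _)]
  · rw [dif_neg h, add_zero]
    apply Finset.sum_congr rfl
    intro t _
    have := t.2
    rw [if_pos (by omega), if_pos (by omega)]

lemma sum_one_change (f g : Fin n → ℕ) (r : Fin n) (h : ∀ t, t ≠ r → f t = g t) :
    ∑ t, f t + g r = ∑ t, g t + f r := by
  rw [← Finset.add_sum_erase univ f (mem_univ r), ← Finset.add_sum_erase univ g (mem_univ r)]
  have : ∑ t ∈ univ.erase r, f t = ∑ t ∈ univ.erase r, g t :=
    Finset.sum_congr rfl fun t ht => h t (Finset.mem_erase.1 ht).1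
  omega

lemma sum_two_change (f g : Fin n → ℕ) (i j : Fin n) (hij : i ≠ j)
    (h : ∀ t, t ≠ i → t ≠ j → f t = g t) :
    ∑ t, f t + (g i + g j) = ∑ t, g t + (f i + f j) := by
  have hmem : i ∈ univ.erase j := Finset.mem_erase.2 ⟨hij, mem_univ i⟩
  rw [← Finset.add_sum_erase univ f (mem_univ j), ← Finset.add_sum_erase _ f hmem,
      ← Finset.add_sum_erase univ g (mem_univ j), ← Finset.add_sum_erase _ g hmem]
  have : ∑ t ∈ (univ.erase j).erase i, f t = ∑ t ∈ (univ.erase j).erase i, g t := by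
    apply Finset.sum_congr rfl
    intro t ht
    have h1 := (Finset.mem_erase.1 ht).1
    have h2 := (Finset.mem_erase.1 (Finset.mem_erase.1 ht).2).1
    exact h t h1 h2
  omega

lemma eq_of_partSums {a c : Fin n → ℕ} (h : ∀ k, k ≤ n → partSum a k = partSum c k) :
    ∀ t, a t = c t := by
  intro t
  have h1 := h t (le_of_lt t.2)
  have h2 := h (t + 1) t.2
  rw [partSum_succ_s5, partSum_succ_s5, dif_pos t.2, dif_pos t.2] at h2
  simp only [Fin.eta] at h2
  omega

lemma transfer (M : Fin n → Fin n → Bool) (i j : Fin n) (hij : i ≠ j)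
    (hlt : colSum M j < colSum M i) :
    ∃ M' : Fin n → Fin n → Bool, (∀ r, rowSum M' r = rowSum M r) ∧
      colSum M' i + 1 = colSum M i ∧ colSum M' j = colSum M j + 1 ∧
      ∀ c, c ≠ i → c ≠ j → colSum M' c = colSum M c := by
  have hex : ∃ r, M r i = true ∧ M r j = false := by
    by_contra hc
    push_neg at hc
    have hle : colSum M i ≤ colSum M j := by
      apply Finset.sum_le_sum
      intro r _
      by_cases h1 : M r i = true
      · have h2 : M r j = true := by simpa using hc r h1
        simp [h1, h2]
      · simp only [Bool.not_eq_true] at h1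
        simp [h1]
    omega
  obtain ⟨r, hri, hrj⟩ := hex
  set M' : Fin n → Fin n → Bool := fun r' c =>
    if r' = r then (if c = i then false else if c = j then true else M r' c)
    else M r' c with hM'
  have entry_ne : ∀ r' c, r' ≠ r → M' r' c = M r' c := by
    intro r' c h; simp [hM', h]
  have entry_r : ∀ c, c ≠ i → c ≠ j → M' r c = M r c := by
    intro c h1 h2; simp [hM', h1, h2]
  have entry_ri : M' r i = false := by simp [hM']
  have entry_rj : M' r j = true := by simp [hM', hij.symm]
  refine ⟨M', ?_, ?_, ?_, ?_⟩
  · intro r'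
    by_cases hr' : r' = r
    · subst hr'
      have key := sum_two_change (fun c => if M' r' c then 1 else 0)
        (fun c => if M r' c then 1 else 0) i j hij
        (fun t h1 h2 => by simp only [entry_r t h1 h2])
      simp only [entry_ri, entry_rj, hri, hrj, eq_self_iff_true, if_true, Bool.false_eq_true, if_false] at key
      unfold rowSum
      omega
    · exact Finset.sum_congr rfl fun c _ => by rw [entry_ne r' c hr']
  · have key := sum_one_change (fun r' => if M' r' i then 1 else 0)
      (fun r' => if M r' i then 1 else 0) r
      (fun t ht => by simp only [entry_ne t i ht])
    simp only [entry_ri, hri, eq_self_iff_true, if_true, Bool.false_eq_true, if_false] at key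
    unfold colSum
    omega
  · have key := sum_one_change (fun r' => if M' r' j then 1 else 0)
      (fun r' => if M r' j then 1 else 0) r
      (fun t ht => by simp only [entry_ne t j ht])
    simp only [entry_rj, hrj, eq_self_iff_true, if_true, Bool.false_eq_true, if_false] at key
    unfold colSum
    omega
  · intro c hc1 hc2
    apply Finset.sum_congr rfl
    intro r' _
    by_cases hr' : r' = r
    · subst hr'; rw [entry_r c hc1 hc2]
    · rw [entry_ne r' c hr']

lemma chain (b : Fin n → ℕ) (a : Fin n → ℕ) (hmono : ∀ i j : Fin n, i ≤ j → a j ≤ a i) :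
    ∀ N : ℕ, ∀ c : Fin n → ℕ,
      (∑ k ∈ Finset.range (n + 1), (partSum c k - partSum a k)) ≤ N →
      (∀ k, partSum a k ≤ partSum c k) → (∑ i, a i = ∑ i, c i) →
      (∃ M : Fin n → Fin n → Bool, (∀ r, rowSum M r = b r) ∧ (∀ t, colSum M t = c t)) →
      ∃ M : Fin n → Fin n → Bool, (∀ r, rowSum M r = b r) ∧ (∀ t, colSum M t = a t) := by
  intro N
  induction N with
  | zero =>
    intro c hphi hle htot hM
    -- all partial sums agree, so a = c
    have heq : ∀ t, a t = c t := by
      apply eq_of_partSums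
      intro k hk
      have h2 : partSum c k - partSum a k
          ≤ ∑ k ∈ Finset.range (n + 1), (partSum c k - partSum a k) :=
        Finset.single_le_sum (f := fun k => partSum c k - partSum a k)
          (fun _ _ => Nat.zero_le _) (Finset.mem_range.2 (by omega))
      have h3 := hle k
      omega
    obtain ⟨M, hMr, hMc⟩ := hM
    exact ⟨M, hMr, fun t => by rw [hMc t, heq t]⟩
  | succ N ih =>
    intro c hphi hle htot hM
    by_cases hac : ∀ t, a t = c t
    · obtain ⟨M, hMr, hMc⟩ := hM
      exact ⟨M, hMr, fun t => by rw [hMc t, hac t]⟩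
    · push_neg at hac
      -- i : minimal index where a and c differ
      have hS1 : (univ.filter fun t : Fin n => a t ≠ c t).Nonempty := by
        obtain ⟨t, ht⟩ := hac
        refine ⟨t, ?_⟩
        simp only [Finset.mem_filter]
        exact ⟨mem_univ t, ht⟩
      obtain ⟨i, hi_mem, hi_min⟩ :
          ∃ i : Fin n, a i ≠ c i ∧ ∀ t : Fin n, t < i → a t = c t := by
        refine ⟨(univ.filter fun t : Fin n => a t ≠ c t).min' hS1,
          (Finset.mem_filter.1 (Finset.min'_mem _ hS1)).2, ?_⟩
        intro t ht
        by_contra hne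
        have hmem : t ∈ univ.filter fun t : Fin n => a t ≠ c t := by
          simp only [Finset.mem_filter]
          exact ⟨mem_univ t, hne⟩
        exact absurd (Finset.min'_le _ t hmem) (not_le.2 ht)
      -- prefix sums before i agree
      have hpre : ∀ k, k ≤ (i : ℕ) → partSum a k = partSum c k := by
        intro k hk
        apply Finset.sum_congr rfl
        intro t _
        by_cases h1 : (t : ℕ) < k
        · rw [if_pos h1, if_pos h1, hi_min t (by omega)]
        · rw [if_neg h1, if_neg h1]
      have hain : a i < c i := by
        have h1 := hle ((i : ℕ) + 1)
        rw [partSum_succ_s5, partSum_succ_s5, dif_pos i.2, dif_pos i.2] at h1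
        simp only [Fin.eta] at h1
        have h2 := hpre (i : ℕ) le_rfl
        have := hi_mem
        omega
      -- j : minimal index where c < a
      have hS2 : (univ.filter fun t : Fin n => c t < a t).Nonempty := by
        by_contra hc
        rw [Finset.not_nonempty_iff_eq_empty, Finset.filter_eq_empty_iff] at hc
        have : ∑ t, a t < ∑ t, c t :=
          Finset.sum_lt_sum (fun t _ => not_lt.1 (by simpa using hc (Finset.mem_univ t)))
            ⟨i, mem_univ i, hain⟩
        omega
      obtain ⟨j, hj_mem, hj_min⟩ :
          ∃ j : Fin n, c j < a j ∧ ∀ t : Fin n, t < j → a t ≤ c t := by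
        refine ⟨(univ.filter fun t : Fin n => c t < a t).min' hS2,
          (Finset.mem_filter.1 (Finset.min'_mem _ hS2)).2, ?_⟩
        intro t ht
        by_contra hne
        have hmem : t ∈ univ.filter fun t : Fin n => c t < a t := by
          simp only [Finset.mem_filter]
          exact ⟨mem_univ t, not_le.1 hne⟩
        exact absurd (Finset.min'_le _ t hmem) (not_le.2 ht)
      have hij : i < j := by
        rcases lt_trichotomy i j with h | h | h
        · exact h
        · exfalso; rw [h] at hain; omega
        · exfalso; have := hi_min j h; omega
      have hijne : i ≠ j := ne_of_lt hij
      have hc2 : c j + 2 ≤ c i := by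
        have := hmono i j (le_of_lt hij)
        omega
      -- the transferred column sums
      set c' : Fin n → ℕ := fun t => if t = i then c i - 1 else if t = j then c j + 1 else c t
        with hc'
      have hc'i : c' i = c i - 1 := by simp [hc']
      have hc'j : c' j = c j + 1 := by simp [hc', hijne.symm]
      have hc'o : ∀ t, t ≠ i → t ≠ j → c' t = c t := by intro t h1 h2; simp [hc', h1, h2]
      -- key partial-sum relation
      have hkey : ∀ k, partSum c' k + (if (i : ℕ) < k then 1 else 0)
          = partSum c k + (if (j : ℕ) < k then 1 else 0) := by
        intro k
        have key := sum_two_change (fun t => if (t : ℕ) < k then c' t else 0)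
          (fun t => if (t : ℕ) < k then c t else 0) i j hijne
          (fun t h1 h2 => by simp only [hc'o t h1 h2])
        simp only [hc'i, hc'j] at key
        unfold partSum
        have hijnat : (i : ℕ) < (j : ℕ) := hij
        by_cases h1 : (i : ℕ) < k <;> by_cases h2 : (j : ℕ) < k <;>
          simp only [h1, h2, if_true, if_false] at key ⊢ <;> omega
      -- strict inequality in the middle range
      have hmid : ∀ k, (i : ℕ) < k → k ≤ (j : ℕ) → partSum a k < partSum c k := by
        intro k
        induction k with
        | zero => omega
        | succ k ihk =>
          intro h1 h2
          by_cases hik : (i : ℕ) < k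
          · have h3 := ihk hik (by omega)
            have hkn : k < n := lt_of_lt_of_le (by omega : k < (j:ℕ) + 1) j.2
            rw [partSum_succ_s5 a k, partSum_succ_s5 c k, dif_pos hkn, dif_pos hkn]
            have h4 : a ⟨k, hkn⟩ ≤ c ⟨k, hkn⟩ := hj_min ⟨k, hkn⟩ (by simpa [Fin.lt_def] using (by omega : k < (j : ℕ)))
            omega
          · have hki : k = (i : ℕ) := by omega
            subst hki
            rw [partSum_succ_s5 a (i : ℕ), partSum_succ_s5 c (i : ℕ), dif_pos i.2, dif_pos i.2]
            simp only [Fin.eta]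
            have := hpre (i : ℕ) le_rfl
            omega
      -- c' still majorizes a
      have hle' : ∀ k, partSum a k ≤ partSum c' k := by
        intro k
        have hk := hkey k
        by_cases h1 : (i : ℕ) < k
        · by_cases h2 : (j : ℕ) < k
          · simp only [h1, h2, if_true] at hk
            have := hle k
            omega
          · have := hmid k h1 (by omega)
            simp only [h1, h2, if_true, if_false] at hk
            omega
        · have h2 : ¬ (j : ℕ) < k := by have : (i:ℕ) < (j:ℕ) := hij; omega
          simp only [h1, h2, if_false] at hk
          have := hle k
          omega
      have hmono' : ∀ k, partSum c' k ≤ partSum c k := by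
        intro k
        have hk := hkey k
        have : (i:ℕ) < (j:ℕ) := hij
        by_cases h1 : (i : ℕ) < k <;> by_cases h2 : (j : ℕ) < k <;>
          simp only [h1, h2, if_true, if_false] at hk <;> omega
      have htot' : ∑ t, a t = ∑ t, c' t := by
        have hk := hkey n
        simp only [if_pos i.2, if_pos j.2] at hk
        rw [partSum_of_ge c' le_rfl, partSum_of_ge c le_rfl] at hk
        omega
      -- the measure strictly decreases
      have hphi' : (∑ k ∈ Finset.range (n + 1), (partSum c' k - partSum a k)) ≤ N := by
        have hlt : (∑ k ∈ Finset.range (n + 1), (partSum c' k - partSum a k))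
            < ∑ k ∈ Finset.range (n + 1), (partSum c k - partSum a k) := by
          apply Finset.sum_lt_sum
          · intro k _
            exact Nat.sub_le_sub_right (hmono' k) _
          · refine ⟨(i : ℕ) + 1, Finset.mem_range.2 (by have := i.2; omega), ?_⟩
            have hk := hkey ((i : ℕ) + 1)
            have hji : ¬ (j : ℕ) < (i : ℕ) + 1 := by have : (i:ℕ) < (j:ℕ) := hij; omega
            simp only [Nat.lt_succ_self, if_true, hji, if_false] at hk
            have h5 := hle' ((i : ℕ) + 1)
            omega
        omega
      -- perform the transfer on the matrix
      obtain ⟨M, hMr, hMc⟩ := hM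
      have hcol : colSum M j < colSum M i := by rw [hMc i, hMc j]; omega
      obtain ⟨M', hM'r, hM'i, hM'j, hM'o⟩ := transfer M i j hijne hcol
      have hM'c : ∀ t, colSum M' t = c' t := by
        intro t
        by_cases h1 : t = i
        · subst h1; rw [hc'i]; have := hMc t; omega
        · by_cases h2 : t = j
          · subst h2; rw [hc'j, hM'j, hMc t]
          · rw [hM'o t h1 h2, hMc t, hc'o t h1 h2]
      exact ih c' hphi' hle' htot' ⟨M', fun r => by rw [hM'r r, hMr r], hM'c⟩

lemma ferrers (b : Fin n → ℕ) (hb : ∀ i, b i ≤ n) :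
    ∃ M : Fin n → Fin n → Bool, (∀ r, rowSum M r = b r) ∧
      ∀ t : Fin n, colSum M t
        = ((univ : Finset (Fin n)).filter fun i : Fin n => (t : ℕ) < b i).card := by
  refine ⟨fun r c => decide ((c : ℕ) < b r), ?_, ?_⟩
  · intro r
    unfold rowSum
    calc ∑ c : Fin n, (if decide ((c : ℕ) < b r) = true then 1 else 0)
        = ∑ c : Fin n, if (c : ℕ) < b r then 1 else 0 :=
          Finset.sum_congr rfl fun c _ => by simp
      _ = ((univ : Finset (Fin n)).filter fun c : Fin n => (c : ℕ) < b r).card :=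
          (Finset.card_filter _ _).symm
      _ = min (b r) n := card_filter_lt _
      _ = b r := min_eq_left (hb r)
  · intro t
    unfold colSum
    rw [Finset.card_filter]
    exact Finset.sum_congr rfl fun r _ => by simp

lemma easy_dir (a b : Fin n → ℕ) (hb : ∀ i, b i ≤ n)
    (M : Fin n → Fin n → Bool) (hMr : ∀ r, rowSum M r = b r) (hMc : ∀ t, colSum M t = a t) :
    (∀ k, partSum a k
      ≤ partSum (fun t : Fin n => ((univ : Finset (Fin n)).filter fun i : Fin n => (t : ℕ) < b i).card) k) ∧
    ∑ t, a t = ∑ t : Fin n, ((univ : Finset (Fin n)).filter fun i : Fin n => (t : ℕ) < b i).card := by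
  have conj_eq : ∀ t : Fin n,
      ((univ : Finset (Fin n)).filter fun i : Fin n => (t : ℕ) < b i).card
        = ∑ i : Fin n, if (t : ℕ) < b i then 1 else 0 := fun t => Finset.card_filter _ _
  have hmin : ∀ m, m ≤ n → (∑ t : Fin n, if (t : ℕ) < m then 1 else 0) = m := by
    intro m hm
    rw [← Finset.card_filter, card_filter_lt, min_eq_left hm]
  -- partSum of the conjugate equals ∑ i, min k (b i)
  have hconj : ∀ k, partSum
      (fun t : Fin n => ((univ : Finset (Fin n)).filter fun i : Fin n => (t : ℕ) < b i).card) k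
      = ∑ i : Fin n, min k (b i) := by
    intro k
    unfold partSum
    calc ∑ t : Fin n, (if (t : ℕ) < k
            then ((univ : Finset (Fin n)).filter fun i : Fin n => (t : ℕ) < b i).card else 0)
        = ∑ t : Fin n, ∑ i : Fin n,
            (if (t : ℕ) < k then (if (t : ℕ) < b i then 1 else 0) else 0) := by
          apply Finset.sum_congr rfl
          intro t _
          by_cases h : (t : ℕ) < k
          · rw [if_pos h, conj_eq]
            exact Finset.sum_congr rfl fun i _ => by rw [if_pos h]
          · rw [if_neg h]
            rw [Finset.sum_congr rfl fun i (_ : i ∈ univ) => if_neg h]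
            simp
      _ = ∑ i : Fin n, ∑ t : Fin n,
            (if (t : ℕ) < k then (if (t : ℕ) < b i then 1 else 0) else 0) := Finset.sum_comm
      _ = ∑ i : Fin n, min k (b i) := by
          apply Finset.sum_congr rfl
          intro i _
          have step : ∀ t : Fin n, (if (t : ℕ) < k then (if (t : ℕ) < b i then 1 else 0) else 0)
              = if (t : ℕ) < min k (b i) then 1 else 0 := by
            intro t
            by_cases h1 : (t : ℕ) < k <;> by_cases h2 : (t : ℕ) < b i <;>
              simp [h1, h2, Nat.lt_min]
          rw [Finset.sum_congr rfl fun t _ => step t]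
          exact hmin _ (le_trans (min_le_right _ _) (hb i))
  constructor
  · intro k
    rw [hconj k]
    have : partSum a k = ∑ i : Fin n, ∑ t : Fin n,
        (if (t : ℕ) < k then (if M i t then 1 else 0) else 0) := by
      unfold partSum
      rw [← Finset.sum_comm]
      apply Finset.sum_congr rfl
      intro t _
      by_cases h : (t : ℕ) < k
      · rw [if_pos h, ← hMc t]
        unfold colSum
        exact Finset.sum_congr rfl fun i _ => by rw [if_pos h]
      · rw [if_neg h]
        rw [Finset.sum_congr rfl fun i (_ : i ∈ univ) => if_neg h]
        simp
    rw [this]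
    apply Finset.sum_le_sum
    intro i _
    apply le_min
    · calc ∑ t : Fin n, (if (t : ℕ) < k then (if M i t then 1 else 0) else 0)
          ≤ ∑ t : Fin n, if (t : ℕ) < k then 1 else 0 := by
            apply Finset.sum_le_sum
            intro t _
            by_cases h : (t : ℕ) < k
            · simp only [if_pos h]
              split <;> omega
            · simp [h]
        _ = min k n := by rw [← Finset.card_filter, card_filter_lt]
        _ ≤ k := min_le_left _ _
    · calc ∑ t : Fin n, (if (t : ℕ) < k then (if M i t then 1 else 0) else 0)
          ≤ ∑ t : Fin n, if M i t then 1 else 0 := by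
            apply Finset.sum_le_sum
            intro t _
            by_cases h : (t : ℕ) < k
            · simp [h]
            · simp [h]
        _ = b i := hMr i
  · rw [← Finset.sum_congr rfl fun t (_ : t ∈ (univ : Finset (Fin n))) => hMc t]
    calc ∑ t : Fin n, colSum M t
        = ∑ t : Fin n, ∑ i : Fin n, if M i t then 1 else 0 := rfl
      _ = ∑ i : Fin n, ∑ t : Fin n, if M i t then 1 else 0 := Finset.sum_comm
      _ = ∑ i : Fin n, b i := Finset.sum_congr rfl fun i _ => hMr i
      _ = ∑ t : Fin n, ∑ i : Fin n, if (t : ℕ) < b i then 1 else 0 := by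
          rw [Finset.sum_comm]
          exact Finset.sum_congr rfl fun i _ => (hmin (b i) (hb i)).symm
      _ = ∑ t : Fin n, ((univ : Finset (Fin n)).filter fun i : Fin n => (t : ℕ) < b i).card :=
          Finset.sum_congr rfl fun t _ => (conj_eq t).symm

end GaleRyserHelpers

theorem stmt5 {n : ℕ} (a b : Fin n → ℕ)
    (hsum : ∑ i, a i = ∑ i, b i) (hmono : Nonincreasing a)
    (ha : ∀ i, a i ≤ n) (hb : ∀ i, b i ≤ n) :
    LoopDigraphic a b ↔
      Majorized a (fun j => (Finset.univ.filter (fun i : Fin n => (j : ℕ) < b i)).card) := by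
  constructor
  · intro h
    obtain ⟨⟨M, hMr, hMc⟩⟩ := (Nat.card_pos_iff.mp h).1
    have he := easy_dir a b hb M hMr hMc
    exact ⟨he.1, he.2⟩
  · rintro ⟨hmaj, htot⟩
    obtain ⟨M0, hM0r, hM0c⟩ := ferrers b hb
    obtain ⟨M, hMr, hMc⟩ := chain b a hmono
      (∑ k ∈ Finset.range (n + 1),
        (partSum (fun t : Fin n => ((univ : Finset (Fin n)).filter fun i : Fin n => (t : ℕ) < b i).card) k
          - partSum a k))
      (fun t : Fin n => ((univ : Finset (Fin n)).filter fun i : Fin n => (t : ℕ) < b i).card)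
      le_rfl hmaj htot ⟨M0, hM0r, hM0c⟩
    have : Nonempty {M : Fin n → Fin n → Bool //
        (∀ i, rowSum M i = b i) ∧ (∀ j, colSum M j = a j)} := ⟨⟨M, hMr, hMc⟩⟩
    exact Nat.card_pos
end

section
/- Let (a,b) be a paired list of nonnegative integers with Σa_i = Σb_i and a nonincreasing. Let a'_j be the j-th column sum of the digraphic Ferrers matrix F where F_{ij}=1 iff (j ≤ b_i and j < i) or (j ≤ b_i + 1 and j > i), and F_{ij}=0 otherwise. Then (a,b) is digraphic (realizable by a loopless digraph with indegrees a and outdegrees b) if and only if a ≺ a'. -/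
open Finset

/-- Column sums of the digraphic Ferrers matrix of `(·,b)` (0-indexed):
row `i`, column `j` holds a `1` iff `(j < b i ∧ j < i) ∨ (j ≤ b i ∧ i < j)`. -/
def digraphicFerrersColSum {n : ℕ} (b : Fin n → ℕ) (j : Fin n) : ℕ :=
  (Finset.univ.filter (fun i : Fin n =>
    ((j : ℕ) < b i ∧ j < i) ∨ ((j : ℕ) ≤ b i ∧ i < j))).card

/-! ### Auxiliary lemmas -/

namespace FCA

variable {n : ℕ}

lemma sum_update_add (f : Fin n → ℕ) (p : Fin n) (t : ℕ) :
    (∑ i, Function.update f p t i) + f p = (∑ i, f i) + t := by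
  rw [Finset.sum_update_of_mem (Finset.mem_univ p),
      ← Finset.sum_erase_add Finset.univ f (Finset.mem_univ p),
      Finset.sdiff_singleton_eq_erase]
  ring

lemma partSum_update (f : Fin n → ℕ) (p : Fin n) (t : ℕ) (k : ℕ) :
    partSum (Function.update f p t) k + (if (p:ℕ) < k then f p else 0)
      = partSum f k + (if (p:ℕ) < k then t else 0) := by
  have h : ∀ i : Fin n, (if (i:ℕ) < k then Function.update f p t i else 0)
      = Function.update (fun i : Fin n => if (i:ℕ) < k then f i else 0) p
          (if (p:ℕ) < k then t else 0) i := by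
    intro i
    rcases eq_or_ne i p with rfl | hip
    · simp
    · simp [Function.update_of_ne hip]
  unfold partSum
  rw [Finset.sum_congr rfl (fun i _ => h i)]
  exact sum_update_add (fun i : Fin n => if (i:ℕ) < k then f i else 0) p _

lemma partSum_succ (f : Fin n → ℕ) (i : Fin n) :
    partSum f ((i:ℕ)+1) = partSum f (i:ℕ) + f i := by
  unfold partSum
  have h : ∀ j : Fin n, (if (j:ℕ) < (i:ℕ)+1 then f j else 0)
      = (if (j:ℕ) < (i:ℕ) then f j else 0) + (if j = i then f j else 0) := by
    intro j
    by_cases hji : j = i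
    · subst hji; simp
    · have hv : (j:ℕ) ≠ (i:ℕ) := fun h => hji (Fin.ext h)
      simp only [if_neg hji, add_zero]
      split_ifs <;> omega
  rw [Finset.sum_congr rfl (fun j _ => h j), Finset.sum_add_distrib,
    Finset.sum_ite_eq' Finset.univ i f]
  simp

lemma partSum_of_le (f : Fin n → ℕ) {k : ℕ} (hk : n ≤ k) : partSum f k = ∑ i, f i := by
  unfold partSum
  exact Finset.sum_congr rfl fun i _ => if_pos (lt_of_lt_of_le i.isLt hk)

lemma sum_ind_eq_card (P : ℕ → Prop) [DecidablePred P] :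
    (∑ j : Fin n, if P (j:ℕ) then 1 else 0) = ((Finset.range n).filter P).card := by
  rw [Finset.card_filter]
  exact Fin.sum_univ_eq_sum_range (fun m => if P m then 1 else 0) n

lemma count_interval (N k B I : ℕ) (hk : k ≤ N) (hI : I < N) :
    ((Finset.range N).filter (fun m => m < k ∧ ((m < B ∧ m < I) ∨ (m ≤ B ∧ I < m)))).card
      = min k (min B I) + (min k (B+1) - (I+1)) := by
  have h : (Finset.range N).filter (fun m => m < k ∧ ((m < B ∧ m < I) ∨ (m ≤ B ∧ I < m)))
      = Finset.range (min k (min B I)) ∪ Finset.Ico (I+1) (min k (B+1)) := by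
    ext m
    simp only [Finset.mem_filter, Finset.mem_range, Finset.mem_union, Finset.mem_Ico]
    omega
  rw [h, Finset.card_union_of_disjoint (by
    rw [Finset.disjoint_left]
    intro m h1 h2
    simp only [Finset.mem_range, Finset.mem_Ico] at h1 h2
    omega), Finset.card_range, Nat.card_Ico]

lemma ferrers_col_eq (b : Fin n → ℕ) (j : Fin n) :
    digraphicFerrersColSum b j
      = ∑ i : Fin n, if ((j:ℕ) < b i ∧ j < i) ∨ ((j:ℕ) ≤ b i ∧ i < j) then 1 else 0 := by
  rw [digraphicFerrersColSum, Finset.card_filter]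

lemma partSum_sum (g : Fin n → Fin n → ℕ) (k : ℕ) :
    partSum (fun j => ∑ i, g i j) k = ∑ i, ∑ j : Fin n, if (j:ℕ) < k then g i j else 0 := by
  unfold partSum
  have h : ∀ j : Fin n, (if (j:ℕ) < k then (∑ i, g i j) else 0)
      = ∑ i, if (j:ℕ) < k then g i j else 0 := by
    intro j; split_ifs <;> simp
  rw [Finset.sum_congr rfl (fun j _ => h j), Finset.sum_comm]

lemma row_count (b : Fin n → ℕ) (i : Fin n) (k : ℕ) (hk : k ≤ n) :
    (∑ j : Fin n, if (j:ℕ) < k ∧ (((j:ℕ) < b i ∧ j < i) ∨ ((j:ℕ) ≤ b i ∧ i < j)) then 1 else 0)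
      = min k (min (b i) (i:ℕ)) + (min k (b i + 1) - ((i:ℕ)+1)) := by
  simp only [Fin.lt_def]
  rw [sum_ind_eq_card (fun m => m < k ∧ ((m < b i ∧ m < (i:ℕ)) ∨ (m ≤ b i ∧ (i:ℕ) < m)))]
  exact count_interval n k (b i) (i:ℕ) hk i.isLt

lemma partSum_ferrers (b : Fin n → ℕ) (k : ℕ) (hk : k ≤ n) :
    partSum (digraphicFerrersColSum b) k
      = ∑ i : Fin n, (min k (min (b i) (i:ℕ)) + (min k (b i + 1) - ((i:ℕ)+1))) := by
  have h1 : digraphicFerrersColSum b = fun j : Fin n => ∑ i : Fin n,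
      if ((j:ℕ) < b i ∧ j < i) ∨ ((j:ℕ) ≤ b i ∧ i < j) then 1 else 0 := by
    funext j; exact ferrers_col_eq b j
  rw [h1, partSum_sum]
  refine Finset.sum_congr rfl fun i _ => ?_
  rw [← row_count b i k hk]
  refine Finset.sum_congr rfl fun j _ => ?_
  by_cases h1 : (j:ℕ) < k
  · by_cases h2 : ((j:ℕ) < b i ∧ j < i) ∨ ((j:ℕ) ≤ b i ∧ i < j) <;> simp [h1, h2]
  · simp [h1]

lemma partSum_colsum (M : Fin n → Fin n → Bool) (k : ℕ) :
    partSum (colSum M) k = ∑ i, ∑ j : Fin n, if (j:ℕ) < k ∧ M i j then 1 else 0 := by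
  have h1 : colSum M = fun j => ∑ i, if M i j then 1 else 0 := rfl
  rw [h1, partSum_sum]
  refine Finset.sum_congr rfl fun i _ => Finset.sum_congr rfl fun j _ => ?_
  by_cases h1 : (j:ℕ) < k
  · by_cases h2 : M i j <;> simp [h1, h2]
  · simp [h1]

lemma row_bound (M : Fin n → Fin n → Bool) (i : Fin n) (hdiag : M i i = false)
    (k : ℕ) (hk : k ≤ n) :
    (∑ j : Fin n, if (j:ℕ) < k ∧ M i j then 1 else 0)
      ≤ min k (min (rowSum M i) (i:ℕ)) + (min k (rowSum M i + 1) - ((i:ℕ)+1)) := by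
  have h1 : (∑ j : Fin n, if (j:ℕ) < k ∧ M i j then 1 else 0) ≤ rowSum M i := by
    refine Finset.sum_le_sum fun j _ => ?_
    split_ifs with h h' <;> simp_all
  have h2 : (∑ j : Fin n, if (j:ℕ) < k ∧ M i j then 1 else 0)
      ≤ ∑ j : Fin n, if (j:ℕ) < k ∧ (j:ℕ) ≠ (i:ℕ) then 1 else 0 := by
    refine Finset.sum_le_sum fun j _ => ?_
    by_cases hj : j = i
    · subst hj; simp [hdiag]
    · have hv : (j:ℕ) ≠ (i:ℕ) := fun h => hj (Fin.ext h)
      split_ifs <;> simp_all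
  rw [sum_ind_eq_card (fun m => m < k ∧ m ≠ (i:ℕ))] at h2
  have h4 : ((Finset.range n).filter fun m => m < k ∧ m ≠ (i:ℕ))
      = (Finset.range k).erase (i:ℕ) := by
    ext m
    simp only [Finset.mem_filter, Finset.mem_range, Finset.mem_erase]
    omega
  rw [h4, Finset.card_erase_eq_ite] at h2
  simp only [Finset.mem_range, Finset.card_range] at h2
  have hi := i.isLt
  split_ifs at h2 <;> omega

lemma rowSum_le (M : Fin n → Fin n → Bool) (i : Fin n) (hdiag : M i i = false) :
    rowSum M i + 1 ≤ n := by
  have h2 : rowSum M i ≤ ∑ j : Fin n, if (j:ℕ) ≠ (i:ℕ) then 1 else 0 := by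
    refine Finset.sum_le_sum fun j _ => ?_
    by_cases hj : j = i
    · subst hj; simp [hdiag]
    · have hv : (j:ℕ) ≠ (i:ℕ) := fun h => hj (Fin.ext h)
      split_ifs <;> simp_all
  rw [sum_ind_eq_card (fun m => m ≠ (i:ℕ))] at h2
  have h4 : ((Finset.range n).filter fun m => m ≠ (i:ℕ)) = (Finset.range n).erase (i:ℕ) := by
    ext m
    simp only [Finset.mem_filter, Finset.mem_range, Finset.mem_erase]
    omega
  rw [h4, Finset.card_erase_of_mem (Finset.mem_range.mpr i.isLt), Finset.card_range] at h2
  have hi := i.isLt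
  omega

lemma exchange (b c : Fin n → ℕ) (u v : Fin n) (huv : u ≠ v) (h2 : c v + 2 ≤ c u)
    (M : Fin n → Fin n → Bool) (hdiag : ∀ i, M i i = false) (hrow : ∀ i, rowSum M i = b i)
    (hcol : ∀ j, colSum M j = c j) :
    ∃ M' : Fin n → Fin n → Bool, (∀ i, M' i i = false) ∧ (∀ i, rowSum M' i = b i) ∧
      (∀ j, colSum M' j = Function.update (Function.update c u (c u - 1)) v (c v + 1) j) := by
  have hex : ∃ i, M i u = true ∧ M i v = false ∧ i ≠ v := by
    by_contra hcon
    push_neg at hcon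
    have hsub : Finset.univ.filter (fun i => M i u = true)
        ⊆ insert v (Finset.univ.filter (fun i => M i v = true)) := by
      intro i hi
      simp only [Finset.mem_filter, Finset.mem_univ, true_and] at hi
      rcases Bool.eq_false_or_eq_true (M i v) with h | h
      · exact Finset.mem_insert.mpr (Or.inr (by simp [Finset.mem_filter, h]))
      · exact Finset.mem_insert.mpr (Or.inl (hcon i hi h))
    have hcu : (Finset.univ.filter (fun i => M i u = true)).card = c u := by
      rw [← hcol u]; rw [colSum, Finset.card_filter]
    have hcv : (Finset.univ.filter (fun i => M i v = true)).card = c v := by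
      rw [← hcol v]; rw [colSum, Finset.card_filter]
    have := Finset.card_le_card hsub
    have := Finset.card_insert_le v (Finset.univ.filter (fun i => M i v = true))
    omega
  obtain ⟨i, hiu, hiv, hinv⟩ := hex
  set row' : Fin n → Bool := Function.update (Function.update (M i) u false) v true with hrow'
  refine ⟨Function.update M i row', ?_, ?_, ?_⟩
  · intro p
    rcases eq_or_ne p i with h | hpi
    · subst h
      rw [Function.update_self, hrow', Function.update_of_ne hinv]
      by_cases h2 : p = u
      · rw [h2, Function.update_self]
      · rw [Function.update_of_ne h2]; exact hdiag p
    · rw [Function.update_of_ne hpi]; exact hdiag p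
  · -- row sums
    intro p
    rcases eq_or_ne p i with h | hpi
    · subst h
      rw [← hrow p, rowSum, rowSum]
      have hpt : ∀ q : Fin n, (if Function.update M p row' p q then 1 else 0)
          = Function.update (Function.update (fun q => if M p q then 1 else 0) u 0) v 1 q := by
        intro q
        rw [Function.update_self]
        rcases eq_or_ne q v with h | hqv
        · subst h
          rw [Function.update_self, hrow', Function.update_self]
          simp
        · rw [Function.update_of_ne hqv, hrow', Function.update_of_ne hqv]
          rcases eq_or_ne q u with h | hqu
          · subst h
            rw [Function.update_self, Function.update_self]
            simp
          · rw [Function.update_of_ne hqu, Function.update_of_ne hqu]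
      have e3 : (∑ q : Fin n, (if Function.update M p row' p q = true then 1 else 0))
          = ∑ q : Fin n, Function.update (Function.update
              (fun q => if M p q then 1 else 0) u 0) v 1 q :=
        Finset.sum_congr rfl (fun q _ => hpt q)
      rw [e3]
      have e1 := sum_update_add (Function.update (fun q => if M p q then 1 else 0) u 0) v 1
      have e2 := sum_update_add (fun q => if M p q then 1 else 0) u 0
      rw [Function.update_of_ne (Ne.symm huv)] at e1
      have gv : (if M p v = true then 1 else 0) = 0 := by rw [hiv]; simp
      have gu : (if M p u = true then 1 else 0) = 1 := by rw [hiu]; simp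
      simp only [gu, gv] at e1 e2
      omega
    · have hne : Function.update M i row' p = M p := Function.update_of_ne hpi row' M
      rw [rowSum, hne, ← rowSum]
      exact hrow p
  · -- col sums
    intro q
    have key : colSum (Function.update M i row') q + (if M i q then 1 else 0)
        = colSum M q + (if row' q then 1 else 0) := by
      have hpt : ∀ p : Fin n, (if Function.update M i row' p q then 1 else 0)
          = Function.update (fun p => if M p q then 1 else 0) i (if row' q then 1 else 0) p := by
        intro p
        rcases eq_or_ne p i with h | hpi
        · subst h; rw [Function.update_self, Function.update_self]
        · rw [Function.update_of_ne hpi, Function.update_of_ne hpi]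
      rw [colSum, Finset.sum_congr rfl (fun p _ => hpt p)]
      exact sum_update_add (fun p => if M p q then 1 else 0) i (if row' q then 1 else 0)
    rcases eq_or_ne q v with h | hqv
    · subst h
      have hv : row' q = true := by rw [hrow']; simp
      rw [hv, hiv] at key
      rw [Function.update_self]
      have hc := hcol q
      simp at key
      omega
    · rw [Function.update_of_ne hqv]
      have hrq : row' q = Function.update (M i) u false q := by
        rw [hrow', Function.update_of_ne hqv]
      rcases eq_or_ne q u with h | hqu
      · subst h
        have hu : row' q = false := by rw [hrq]; simp
        rw [hu, hiu] at key
        rw [Function.update_self]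
        have hc := hcol q
        simp at key
        omega
      · have hq : row' q = M i q := by rw [hrq, Function.update_of_ne hqu]
        rw [hq] at key
        rw [Function.update_of_ne hqu]
        have hc := hcol q
        omega

lemma transfer_down (a b : Fin n → ℕ) (hmono : Nonincreasing a) :
    ∀ N (c : Fin n → ℕ),
      (∑ k ∈ Finset.range (n+1), (partSum c k - partSum a k)) ≤ N →
      (∀ k, partSum a k ≤ partSum c k) → (∑ i, c i = ∑ i, a i) →
      Digraphic c b → Digraphic a b := by
  intro N
  induction N with
  | zero =>
    intro c hN hle hsum hd
    have hac : a = c := by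
      funext i
      have h1 : ∀ k, k ≤ n → partSum c k = partSum a k := by
        intro k hk
        have h0 : partSum c k - partSum a k = 0 :=
          Finset.sum_eq_zero_iff.mp (Nat.le_zero.mp hN) k (Finset.mem_range.mpr (by omega))
        have := hle k
        omega
      have e1 := partSum_succ a i
      have e2 := partSum_succ c i
      have hi := i.isLt
      have k1 := h1 (i:ℕ) (by omega)
      have k2 := h1 ((i:ℕ)+1) (by omega)
      omega
    rw [hac]; exact hd
  | succ N ih =>
    intro c hN hle hsumc hd
    by_cases hac : a = c
    · rw [hac]; exact hd
    -- least index where a and c differ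
    have hS : (Finset.univ.filter (fun i : Fin n => a i ≠ c i)).Nonempty := by
      rw [Finset.filter_nonempty_iff]
      obtain ⟨i, hi⟩ := Function.ne_iff.mp hac
      exact ⟨i, Finset.mem_univ i, hi⟩
    set u := (Finset.univ.filter (fun i : Fin n => a i ≠ c i)).min' hS with hu
    have hu_mem : a u ≠ c u := by
      have := Finset.min'_mem _ hS
      rw [← hu] at this
      exact (Finset.mem_filter.mp this).2
    have hu_min : ∀ i : Fin n, a i ≠ c i → u ≤ i := by
      intro i hi
      exact Finset.min'_le _ i (Finset.mem_filter.mpr ⟨Finset.mem_univ i, hi⟩)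
    have hbefore : ∀ i : Fin n, i < u → a i = c i := by
      intro i hi
      by_contra h
      exact absurd (hu_min i h) (not_le.mpr hi)
    -- a u < c u
    have hpsu : partSum a (u:ℕ) = partSum c (u:ℕ) := by
      unfold partSum
      refine Finset.sum_congr rfl fun i _ => ?_
      by_cases h : (i:ℕ) < (u:ℕ)
      · rw [if_pos h, if_pos h, hbefore i (Fin.lt_def.mpr h)]
      · rw [if_neg h, if_neg h]
    have hauc : a u < c u := by
      have h1 := hle ((u:ℕ)+1)
      rw [partSum_succ a u, partSum_succ c u] at h1
      rcases Nat.lt_or_ge (a u) (c u) with h | h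
      · exact h
      · omega
    -- least index where c < a
    have hT : (Finset.univ.filter (fun i : Fin n => c i < a i)).Nonempty := by
      by_contra h
      rw [Finset.filter_nonempty_iff] at h
      push_neg at h
      have hall : ∀ i : Fin n, i ∈ Finset.univ → a i ≤ c i := fun i _ =>
        h i (Finset.mem_univ i)
      have := Finset.sum_lt_sum hall ⟨u, Finset.mem_univ u, hauc⟩
      omega
    set v := (Finset.univ.filter (fun i : Fin n => c i < a i)).min' hT with hv
    have hv_mem : c v < a v := by
      have := Finset.min'_mem _ hT
      rw [← hv] at this
      exact (Finset.mem_filter.mp this).2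
    have hv_min : ∀ i : Fin n, c i < a i → v ≤ i := by
      intro i hi
      exact Finset.min'_le _ i (Finset.mem_filter.mpr ⟨Finset.mem_univ i, hi⟩)
    have hmid : ∀ i : Fin n, i < v → a i ≤ c i := by
      intro i hi
      by_contra h
      exact absurd (hv_min i (not_le.mp h)) (not_le.mpr hi)
    have huv : u < v := by
      rcases lt_trichotomy u v with h | h | h
      · exact h
      · exfalso; rw [h] at hauc; omega
      · exfalso
        have := hbefore v h
        omega
    have huvval : (u:ℕ) < (v:ℕ) := Fin.lt_def.mp huv
    have hvu : v ≠ u := Ne.symm (ne_of_lt huv)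
    have hcu2 : c v + 2 ≤ c u := by
      have h1 : a v ≤ a u := hmono u v (le_of_lt huv)
      omega
    set c' : Fin n → ℕ := Function.update (Function.update c u (c u - 1)) v (c v + 1) with hc'
    have hv' : Function.update c u (c u - 1) v = c v := Function.update_of_ne hvu _ c
    -- partial sums of c'
    have hps' : ∀ k, partSum c' k + (if (u:ℕ) < k ∧ k ≤ (v:ℕ) then 1 else 0) = partSum c k := by
      intro k
      have e1 := partSum_update (Function.update c u (c u - 1)) v (c v + 1) k
      have e2 := partSum_update c u (c u - 1) k
      rw [hv'] at e1
      rw [← hc'] at e1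
      split_ifs with h
      · split_ifs at e1 e2 <;> omega
      · split_ifs at e1 e2 <;> omega
    have hle' : ∀ k, partSum a k ≤ partSum c' k := by
      intro k
      have hkey := hps' k
      by_cases hk : (u:ℕ) < k ∧ k ≤ (v:ℕ)
      · rw [if_pos hk] at hkey
        have hlt : partSum a k < partSum c k := by
          unfold partSum
          refine Finset.sum_lt_sum (fun i _ => ?_) ⟨u, Finset.mem_univ u, ?_⟩
          · by_cases h : (i:ℕ) < k
            · rw [if_pos h, if_pos h]
              rcases lt_trichotomy i u with hiu | hiu | hiu
              · rw [hbefore i hiu]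
              · rw [hiu]; exact le_of_lt hauc
              · exact hmid i (Fin.lt_def.mpr (by omega))
            · rw [if_neg h, if_neg h]
          · rw [if_pos hk.1, if_pos hk.1]
            exact hauc
        omega
      · rw [if_neg hk, add_zero] at hkey
        rw [hkey]
        exact hle k
    have hsum' : ∑ i, c' i = ∑ i, a i := by
      have e1 := sum_update_add (Function.update c u (c u - 1)) v (c v + 1)
      have e2 := sum_update_add c u (c u - 1)
      rw [hv', ← hc'] at e1
      omega
    -- measure decreases
    have hmeas : (∑ k ∈ Finset.range (n+1), (partSum c' k - partSum a k)) ≤ N := by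
      have hlt : (∑ k ∈ Finset.range (n+1), (partSum c' k - partSum a k))
          < ∑ k ∈ Finset.range (n+1), (partSum c k - partSum a k) := by
        refine Finset.sum_lt_sum (fun k _ => ?_) ⟨(u:ℕ)+1, Finset.mem_range.mpr (by
          have := u.isLt; omega), ?_⟩
        · have h1 := hps' k
          have h2 := hle' k
          split_ifs at h1 <;> omega
        · have h1 := hps' ((u:ℕ)+1)
          have h2 := hle' ((u:ℕ)+1)
          rw [if_pos ⟨by omega, by omega⟩] at h1
          have h3 := hle ((u:ℕ)+1)
          omega
      omega
    -- realization of c'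
    obtain ⟨⟨M, hM1, hM2, hM3⟩⟩ := (Nat.card_pos_iff.mp hd).1
    obtain ⟨M', h1', h2', h3'⟩ := exchange b c u v (ne_of_lt huv) hcu2 M hM1 hM2 hM3
    have hd' : Digraphic c' b := by
      haveI : Nonempty {M : Fin n → Fin n → Bool //
          (∀ i, M i i = false) ∧ (∀ i, rowSum M i = b i) ∧ (∀ j, colSum M j = c' j)} :=
        ⟨⟨M', h1', h2', fun j => by rw [h3' j, hc']⟩⟩
      exact Nat.card_pos
    exact ih c' hmeas hle' hsum' hd'

end FCA

open FCA in
theorem stmt6 {n : ℕ} (a b : Fin n → ℕ)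
    (hsum : ∑ i, a i = ∑ i, b i) (hmono : Nonincreasing a) :
    Digraphic a b ↔ Majorized a (digraphicFerrersColSum b) := by
  constructor
  · intro hD
    obtain ⟨⟨M, hdiag, hrow, hcol⟩⟩ := (Nat.card_pos_iff.mp hD).1
    have hb : ∀ i : Fin n, b i + 1 ≤ n := fun i => hrow i ▸ rowSum_le M i (hdiag i)
    have ha : a = colSum M := funext fun j => (hcol j).symm
    have hSa' : ∑ j, digraphicFerrersColSum b j = ∑ i, b i := by
      have h1 := partSum_ferrers b n le_rfl
      rw [partSum_of_le _ le_rfl] at h1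
      rw [h1]
      refine Finset.sum_congr rfl fun i _ => ?_
      have := hb i
      have := i.isLt
      omega
    constructor
    · intro k
      rcases le_or_gt k n with hk | hk
      · rw [ha, partSum_colsum, partSum_ferrers b k hk]
        refine Finset.sum_le_sum fun i _ => ?_
        have h := row_bound M i (hdiag i) k hk
        rw [hrow i] at h
        exact h
      · rw [partSum_of_le a (by omega), partSum_of_le _ (by omega), hSa', hsum]
    · rw [hsum, hSa']
  · rintro ⟨hle, hS⟩
    have h1 := partSum_ferrers b n le_rfl
    rw [partSum_of_le _ le_rfl] at h1
    have hSa' : ∑ i : Fin n, (min n (min (b i) (i:ℕ)) + (min n (b i + 1) - ((i:ℕ)+1)))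
        = ∑ i, b i := by
      rw [← h1, ← hS, hsum]
    have hb : ∀ i : Fin n, b i + 1 ≤ n := by
      by_contra hcon
      push_neg at hcon
      obtain ⟨i, hi⟩ := hcon
      have hlt : ∀ j : Fin n, j ∈ Finset.univ →
          (min n (min (b j) (j:ℕ)) + (min n (b j + 1) - ((j:ℕ)+1))) ≤ b j := by
        intro j _
        have := j.isLt
        omega
      have hstrict : (min n (min (b i) (i:ℕ)) + (min n (b i + 1) - ((i:ℕ)+1))) < b i := by
        have := i.isLt
        omega
      have := Finset.sum_lt_sum hlt ⟨i, Finset.mem_univ i, hstrict⟩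
      omega
    set F : Fin n → Fin n → Bool :=
      fun i j => decide (((j:ℕ) < b i ∧ j < i) ∨ ((j:ℕ) ≤ b i ∧ i < j)) with hF
    have hFdiag : ∀ i, F i i = false := by
      intro i
      simp [hF]
    have hFrow : ∀ i, rowSum F i = b i := by
      intro i
      rw [rowSum]
      have hpt : ∀ j : Fin n, (if F i j then 1 else 0)
          = if ((j:ℕ) < n ∧ (((j:ℕ) < b i ∧ j < i) ∨ ((j:ℕ) ≤ b i ∧ i < j))) then 1 else 0 := by
        intro j
        by_cases h : ((j:ℕ) < b i ∧ j < i) ∨ ((j:ℕ) ≤ b i ∧ i < j) <;>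
          simp [hF, h, j.isLt]
      rw [Finset.sum_congr rfl (fun j _ => hpt j), row_count b i n le_rfl]
      have := i.isLt
      have := hb i
      omega
    have hFcol : ∀ j, colSum F j = digraphicFerrersColSum b j := by
      intro j
      rw [colSum, ferrers_col_eq]
      refine Finset.sum_congr rfl fun i _ => ?_
      by_cases h : ((j:ℕ) < b i ∧ j < i) ∨ ((j:ℕ) ≤ b i ∧ i < j) <;> simp [hF, h]
    have hDf : Digraphic (digraphicFerrersColSum b) b := by
      haveI : Nonempty {M : Fin n → Fin n → Bool //
          (∀ i, M i i = false) ∧ (∀ i, rowSum M i = b i) ∧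
          (∀ j, colSum M j = digraphicFerrersColSum b j)} := ⟨⟨F, hFdiag, hFrow, hFcol⟩⟩
      exact Nat.card_pos
    exact transfer_down a b hmono _ (digraphicFerrersColSum b) le_rfl hle hS.symm hDf
end

section
/- Let a be a nonincreasing nonnegative integer list with even sum, and let a' be its corresponding graphic threshold list, obtained as the column sums of the digraphic Ferrers matrix of (a,a) (F_{ij}=1 iff (j ≤ a_i and j < i) or (j ≤ a_i+1 and j > i)). Then a is graphic if and only if a ≺ a'. -/
/-
Majorization by the threshold list is the Erdős–Gallai condition: counting the ones of the Ferrers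
matrix in its first `k ≤ n` columns row by row shows that `partSum (thresholdList a) k` is
`∑ i, min (a i) (egCap k i)`. Necessity is then double counting in an adjacency matrix.

Sufficiency is Choudum's induction on `∑ a`. Lower by one the last positive entry `a v` and the
entry `a u`, where `u` is the last index before `v` of the leading block of maximal entries. The
lowered list is again nonincreasing and even, and it still satisfies the Erdős–Gallai inequalities:
this is a case analysis on the position of `k` relative to `u` and `v`, which uses the parity of
`∑ a` when `a u = k` and the inequality at `k + 1` when `k < a u`. By induction it has a
realization, which becomes one of `a` by adding the edge `uv`, after a 2-switch if `uv` is already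
an edge.
-/

open Finset

/-- Column sums of the digraphic Ferrers matrix of `(a,a)` (0-indexed). -/
def thresholdList {n : ℕ} (a : Fin n → ℕ) (j : Fin n) : ℕ :=
  (Finset.univ.filter (fun i : Fin n =>
    ((j : ℕ) < a i ∧ j < i) ∨ ((j : ℕ) ≤ a i ∧ i < j))).card

def egCap {n : ℕ} (k : ℕ) (i : Fin n) : ℕ :=
  if (i : ℕ) < k then k - 1 else k

def egBound {n : ℕ} (a : Fin n → ℕ) (k : ℕ) : ℕ :=
  ∑ i : Fin n, min (a i) (egCap k i)

lemma partSum_of_le {n : ℕ} (a : Fin n → ℕ) {k : ℕ} (hk : n ≤ k) :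
    partSum a k = ∑ i, a i :=
  sum_congr rfl fun i _ => if_pos (i.isLt.trans_le hk)

lemma egBound_self {n : ℕ} (a : Fin n → ℕ) : egBound a n = ∑ i, min (a i) (n - 1) :=
  sum_congr rfl fun i _ => by rw [egCap, if_pos i.isLt]

lemma card_ferrersRow {n k : ℕ} (hk : k ≤ n) (d i : ℕ) :
    #{j ∈ range n | j < k ∧ ((j < d ∧ j < i) ∨ (j ≤ d ∧ i < j))} =
      min d (if i < k then k - 1 else k) := by
  rcases le_or_gt d i with hdi | hid
  · have : {j ∈ range n | j < k ∧ ((j < d ∧ j < i) ∨ (j ≤ d ∧ i < j))} = range (min d k) := by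
      ext j; simp only [mem_filter, mem_range, lt_min_iff]; omega
    rw [this, card_range]
    split <;> omega
  · have : {j ∈ range n | j < k ∧ ((j < d ∧ j < i) ∨ (j ≤ d ∧ i < j))} =
        (range (min (d + 1) k)).erase i := by
      ext j; simp only [mem_filter, mem_range, mem_erase, lt_min_iff]; omega
    rw [this]
    by_cases h : i < min (d + 1) k
    · rw [card_erase_of_mem (mem_range.mpr h), card_range]
      split <;> omega
    · rw [erase_eq_of_notMem (by simpa using h), card_range]
      split <;> omega

lemma partSum_thresholdList {n : ℕ} (a : Fin n → ℕ) {k : ℕ} (hk : k ≤ n) :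
    partSum (thresholdList a) k = egBound a k := by
  have hrow (i : Fin n) : ∑ j : Fin n,
      (if (j : ℕ) < k ∧ (((j : ℕ) < a i ∧ j < i) ∨ ((j : ℕ) ≤ a i ∧ i < j)) then 1 else 0) =
      min (a i) (egCap k i) := by
    rw [egCap, ← card_ferrersRow hk (a i) i, card_filter,
      ← Fin.sum_univ_eq_sum_range (fun j => if j < k ∧ ((j < a i ∧ j < i) ∨ (j ≤ a i ∧ i < j))
        then 1 else 0)]
    simp only [Fin.lt_def]
  simp only [partSum, thresholdList, egBound, ← hrow, card_filter]
  rw [sum_comm]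
  refine sum_congr rfl fun j _ => ?_
  split_ifs with h <;> simp [h]

lemma majorized_thresholdList_iff {n : ℕ} (a : Fin n → ℕ) :
    Majorized a (thresholdList a) ↔ ∀ k ≤ n, partSum a k ≤ egBound a k := by
  have htotal : ∑ i, thresholdList a i = ∑ i, min (a i) (n - 1) := by
    rw [← partSum_of_le _ le_rfl, partSum_thresholdList a le_rfl, egBound_self]
  refine ⟨fun h k hk => partSum_thresholdList a hk ▸ h.1 k, fun h => ?_⟩
  have hsum : ∑ i, a i = ∑ i, thresholdList a i := by
    refine le_antisymm ?_ (htotal ▸ sum_le_sum fun i _ => min_le_left _ _)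
    simpa [partSum_of_le a le_rfl, htotal, egBound_self] using h n le_rfl
  refine ⟨fun k => ?_, hsum⟩
  rcases le_or_gt k n with hk | hk
  · exact partSum_thresholdList a hk ▸ h k hk
  · rw [partSum_of_le a hk.le, partSum_of_le _ hk.le, hsum]

def IsRealization {n : ℕ} (M : Fin n → Fin n → Bool) (d : Fin n → ℕ) : Prop :=
  (∀ i j, M i j = M j i) ∧ (∀ i, M i i = false) ∧ ∀ i, rowSum M i = d i

lemma graphic_iff_exists_isRealization {n : ℕ} (d : Fin n → ℕ) :
    Graphic d ↔ ∃ M, IsRealization M d := by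
  simp only [Graphic, N3, Nat.card_pos_iff, nonempty_subtype, IsRealization]
  exact and_iff_left inferInstance

lemma rowSum_eq_card {n : ℕ} (M : Fin n → Fin n → Bool) (i : Fin n) :
    rowSum M i = #{j | M i j} :=
  (card_filter _ _).symm

lemma card_adj_lt_le_min_egCap {n : ℕ} {M : Fin n → Fin n → Bool} {d : Fin n → ℕ}
    (hM : IsRealization M d) (k : ℕ) (j : Fin n) :
    #{i : Fin n | (i : ℕ) < k ∧ M j i} ≤ min (d j) (egCap k j) := by
  obtain ⟨-, hdiag, hrow⟩ := hM
  refine le_min ?_ ?_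
  · rw [← hrow, rowSum_eq_card]
    exact card_le_card fun i => by simp +contextual
  · have hsub : ({i : Fin n | (i : ℕ) < k ∧ M j i} : Finset (Fin n)) ⊆
        ({i : Fin n | (i : ℕ) < k} : Finset (Fin n)).erase j := fun i => by
      simp only [mem_filter, mem_univ, true_and, mem_erase]
      rintro ⟨hi, hji⟩
      exact ⟨by rintro rfl; simp [hdiag] at hji, hi⟩
    refine (card_le_card hsub).trans ?_
    have := Fin.card_filter_val_lt (n := n) (m := k)
    unfold egCap
    split_ifs with hj
    · rw [card_erase_of_mem (by simpa using hj)]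
      omega
    · exact (card_erase_le).trans (by omega)

lemma partSum_le_egBound_of_graphic {n : ℕ} {a : Fin n → ℕ} (ha : Graphic a) (k : ℕ) :
    partSum a k ≤ egBound a k := by
  obtain ⟨M, hM⟩ := (graphic_iff_exists_isRealization a).1 ha
  have hcount : partSum a k = ∑ j, #{i : Fin n | (i : ℕ) < k ∧ M j i} := by
    simp only [partSum, card_filter, ← hM.2.2, rowSum]
    rw [sum_comm]
    refine sum_congr rfl fun j _ => ?_
    simp_rw [hM.1 j]
    split_ifs with h <;> simp [h]
  rw [hcount]
  exact sum_le_sum fun j _ => card_adj_lt_le_min_egCap hM k j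

def toggle {n : ℕ} (M : Fin n → Fin n → Bool) (p q : Fin n) : Fin n → Fin n → Bool :=
  fun i j => if (i = p ∧ j = q) ∨ (i = q ∧ j = p) then !M i j else M i j

section toggle

variable {n : ℕ} {M : Fin n → Fin n → Bool} {p q : Fin n}

lemma toggle_comm (M : Fin n → Fin n → Bool) (p q : Fin n) : toggle M p q = toggle M q p := by
  funext i j
  exact if_congr or_comm rfl rfl

lemma toggle_apply_of_not {i j : Fin n} (h : ¬((i = p ∧ j = q) ∨ (i = q ∧ j = p))) :
    toggle M p q i j = M i j :=
  if_neg h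

lemma toggle_symm (hsymm : ∀ i j, M i j = M j i) (i j : Fin n) :
    toggle M p q i j = toggle M p q j i := by
  unfold toggle
  rw [hsymm i j]
  exact if_congr (by tauto) rfl rfl

lemma toggle_diag (hpq : p ≠ q) (hdiag : ∀ i, M i i = false) (i : Fin n) :
    toggle M p q i i = false := by
  rw [toggle_apply_of_not (by rintro (⟨rfl, rfl⟩ | ⟨rfl, rfl⟩) <;> exact hpq rfl), hdiag]

lemma rowSum_toggle_left (hpq : p ≠ q) :
    rowSum (toggle M p q) p + (if M p q then 1 else 0) =
      rowSum M p + (if M p q = false then 1 else 0) := by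
  have hrest : ∑ j ∈ univ.erase q, (if toggle M p q p j then 1 else 0) =
      ∑ j ∈ univ.erase q, (if M p j then 1 else 0) :=
    sum_congr rfl fun j hj => by
      rw [toggle_apply_of_not (by rintro (⟨-, rfl⟩ | ⟨rfl, -⟩) <;> simp_all)]
  have hpq' : toggle M p q p q = !M p q := if_pos (Or.inl ⟨rfl, rfl⟩)
  rw [rowSum, rowSum, ← add_sum_erase _ _ (mem_univ q), ← add_sum_erase _ _ (mem_univ q),
    hrest, hpq']
  cases M p q <;> simp <;> omega

lemma rowSum_toggle (hsymm : ∀ i j, M i j = M j i) (hpq : p ≠ q) (i : Fin n) :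
    rowSum (toggle M p q) i + (if (i = p ∨ i = q) ∧ M p q then 1 else 0) =
      rowSum M i + (if (i = p ∨ i = q) ∧ M p q = false then 1 else 0) := by
  by_cases hip : i = p
  · subst hip
    simpa using rowSum_toggle_left (M := M) hpq
  by_cases hiq : i = q
  · subst hiq
    rw [toggle_comm, hsymm p]
    simpa using rowSum_toggle_left (M := M) (Ne.symm hpq)
  simp only [hip, hiq, false_or, false_and, if_false, add_zero]
  exact sum_congr rfl fun j _ => by rw [toggle_apply_of_not (by tauto)]

lemma IsRealization.toggle {d : Fin n → ℕ} (hM : IsRealization M d) (hpq : p ≠ q) :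
    IsRealization (toggle M p q) (rowSum (toggle M p q)) :=
  ⟨toggle_symm hM.1, toggle_diag hpq hM.2.1, fun _ => rfl⟩

end toggle

lemma exists_not_adj_le {n : ℕ} {M : Fin n → Fin n → Bool} {u v : Fin n}
    (h : rowSum M u < v) : ∃ x ≤ v, x ≠ u ∧ M u x = false := by
  by_contra! hadj
  have hsub : (Iic v).erase u ⊆ ({j | M u j} : Finset (Fin n)) := fun x hx => by
    obtain ⟨hxu, hxv⟩ := mem_erase.1 hx
    simpa using hadj x (mem_Iic.1 hxv) hxu
  have := (pred_card_le_card_erase (s := Iic v) (a := u)).trans (card_le_card hsub)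
  rw [Fin.card_Iic, ← rowSum_eq_card] at this
  omega

lemma exists_adj_not_adj_of_rowSum_lt {n : ℕ} {M : Fin n → Fin n → Bool}
    (hsymm : ∀ i j, M i j = M j i) (hdiag : ∀ i, M i i = false) {v x : Fin n}
    (h : rowSum M v < rowSum M x) : ∃ y, M x y ∧ M v y = false ∧ y ≠ v := by
  by_contra! hsub
  rw [rowSum_eq_card, rowSum_eq_card] at h
  refine h.not_ge ?_
  cases hxv : M x v
  · refine card_le_card fun y hy => ?_
    simp only [mem_filter, mem_univ, true_and] at hy ⊢
    by_contra hvy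
    have := hsub y hy (by simpa using hvy)
    simp_all
  · have hxN : x ∈ ({j | M v j} : Finset (Fin n)) := by simp [hsymm v x, hxv]
    calc #{j | M x j} ≤ #(insert v (({j | M v j} : Finset (Fin n)).erase x)) := by
          refine card_le_card fun y hy => ?_
          simp only [mem_filter, mem_univ, true_and, mem_insert, mem_erase] at hy ⊢
          by_cases hvy : M v y
          · exact Or.inr ⟨by rintro rfl; simp [hdiag] at hy, hvy⟩
          · exact Or.inl (hsub y hy (by simpa using hvy))
      _ ≤ #(({j | M v j} : Finset (Fin n)).erase x) + 1 := card_insert_le _ _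
      _ = #{j | M v j} := card_erase_add_one hxN


def lowerPair {n : ℕ} (a : Fin n → ℕ) (u v : Fin n) : Fin n → ℕ :=
  fun i => if i = u ∨ i = v then a i - 1 else a i

section lowerPair

variable {n : ℕ} {a : Fin n → ℕ} {u v : Fin n}

lemma lowerPair_add (hu : 0 < a u) (hv : 0 < a v) (i : Fin n) :
    lowerPair a u v i + (if i = u ∨ i = v then 1 else 0) = a i := by
  unfold lowerPair
  split_ifs with h
  · rcases h with rfl | rfl <;> omega
  · rfl

lemma sum_ite_eq_or_eq (huv : u ≠ v) (f : Fin n → ℕ) :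
    ∑ i, (if i = u ∨ i = v then f i else 0) = f u + f v := by
  rw [← sum_filter, show ({i | i = u ∨ i = v} : Finset (Fin n)) = {u, v} by ext; simp,
    sum_pair huv]

lemma partSum_lowerPair (huv : u ≠ v) (hu : 0 < a u) (hv : 0 < a v) (k : ℕ) :
    partSum (lowerPair a u v) k + ((if (u : ℕ) < k then 1 else 0) + (if (v : ℕ) < k then 1 else 0))
      = partSum a k := by
  rw [← sum_ite_eq_or_eq huv (fun i => if (i : ℕ) < k then 1 else 0), partSum, partSum,
    ← sum_add_distrib]
  refine sum_congr rfl fun i _ => ?_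
  have := lowerPair_add hu hv i
  split_ifs at this ⊢ <;> omega

lemma egBound_lowerPair (huv : u ≠ v) (hu : 0 < a u) (hv : 0 < a v) (k : ℕ) :
    egBound (lowerPair a u v) k +
        ((if a u ≤ egCap k u then 1 else 0) + (if a v ≤ egCap k v then 1 else 0))
      = egBound a k := by
  rw [← sum_ite_eq_or_eq huv (fun i => if a i ≤ egCap k i then 1 else 0), egBound, egBound,
    ← sum_add_distrib]
  refine sum_congr rfl fun i _ => ?_
  have := lowerPair_add hu hv i
  split_ifs at this ⊢ <;> omega

lemma sum_lowerPair (huv : u ≠ v) (hu : 0 < a u) (hv : 0 < a v) :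
    ∑ i, lowerPair a u v i + 2 = ∑ i, a i := by
  rw [← sum_congr rfl fun i _ => lowerPair_add hu hv i, sum_add_distrib,
    sum_ite_eq_or_eq huv fun _ => 1]

lemma nonincreasing_lowerPair (hmono : Nonincreasing a) (huv : u < v)
    (hdrop : ∀ j < v, u < j → a j < a u) (hzero : ∀ j, v < j → a j = 0) :
    Nonincreasing (lowerPair a u v) := by
  intro i j hij
  have := hmono i j hij
  unfold lowerPair
  split_ifs with hj hi hi <;> try omega
  rcases hi with rfl | rfl
  · rcases lt_trichotomy j v with hjv | rfl | hjv
    · have := hdrop j hjv (lt_of_le_of_ne hij (by rintro rfl; simp at hj))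
      omega
    · simp at hj
    · have := hzero j hjv
      omega
  · have := hzero j (lt_of_le_of_ne hij (by rintro rfl; simp at hj))
    omega

lemma graphic_of_graphic_lowerPair (hmono : Nonincreasing a) (huv : u < v) (hv : 0 < a v)
    (hau : a u ≤ v) (hG : Graphic (lowerPair a u v)) : Graphic a := by
  obtain ⟨M, hM⟩ := (graphic_iff_exists_isRealization _).1 hG
  have ⟨hsymm, hdiag, hrow⟩ := hM
  have hdeg := lowerPair_add (hv.trans_le (hmono u v huv.le)) hv
  have hne : u ≠ v := huv.ne
  rw [graphic_iff_exists_isRealization]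
  by_cases hMuv : M u v = false
  · refine ⟨toggle M u v, hM.toggle hne |>.1, hM.toggle hne |>.2.1, fun i => ?_⟩
    have := rowSum_toggle hsymm hne i
    simp only [hMuv] at this
    grind
  obtain ⟨x, hxv, hxu, hux⟩ := exists_not_adj_le (M := M) (u := u) (v := v)
    (by have := hdeg u; grind)
  obtain ⟨y, hxy, hvy, hyv⟩ := exists_adj_not_adj_of_rowSum_lt hsymm hdiag (v := v) (x := x)
    (by have := hdeg v; have := hdeg x; have := hmono x v hxv; grind)
  have hxv' : x ≠ v := by rintro rfl; simp_all
  have hyu : y ≠ u := by rintro rfl; exact hMuv (by rw [hsymm]; exact hvy)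
  have hxy' : x ≠ y := by rintro rfl; simp_all
  -- Remove `xy`, add `ux` and `vy`: only the degrees of `u` and `v` change, by one each.
  set M₁ := toggle M x y
  set M₂ := toggle M₁ u x
  have h₁ := hM.toggle hxy'
  have h₂ := h₁.toggle (Ne.symm hxu)
  have h₃ := h₂.toggle (Ne.symm hyv)
  refine ⟨toggle M₂ v y, h₃.1, h₃.2.1, fun i => ?_⟩
  have e₁ := rowSum_toggle hsymm hxy' i
  have e₂ := rowSum_toggle h₁.1 (Ne.symm hxu) i
  have e₃ := rowSum_toggle h₂.1 (Ne.symm hyv) i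
  have hM₁ux : M₁ u x = M u x := toggle_apply_of_not (by grind)
  have hM₂vy : M₂ v y = M v y := (toggle_apply_of_not (by grind)).trans
    (toggle_apply_of_not (by grind))
  have := hdeg i
  have := hrow i
  grind

end lowerPair

section splitSums

variable {n : ℕ}

lemma sum_lt_add_sum_ge (f : Fin n → ℕ) (k : ℕ) :
    ∑ i with i.val < k, f i + ∑ i with k ≤ i.val, f i = ∑ i, f i := by
  simpa only [not_lt] using sum_filter_add_sum_filter_not univ (fun i : Fin n => (i : ℕ) < k) f

lemma sum_ge_eq_add_sum_ge_succ {k : ℕ} (hk : k < n) (f : Fin n → ℕ) :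
    ∑ i with k ≤ i.val, f i = f ⟨k, hk⟩ + ∑ i with k + 1 ≤ i.val, f i := by
  have : ({i | k ≤ i.val} : Finset (Fin n)) =
      insert ⟨k, hk⟩ ({i | k + 1 ≤ i.val} : Finset (Fin n)) := by
    ext i; simp only [mem_filter, mem_univ, true_and, mem_insert, Fin.ext_iff]; omega
  rw [this, sum_insert (by simp)]

lemma le_sum_ge_of_ne {f : Fin n → ℕ} {k : ℕ} {u v : Fin n} (huv : u ≠ v)
    (hu : k ≤ (u : ℕ)) (hv : k ≤ (v : ℕ)) :
    f u + f v ≤ ∑ i with k ≤ i.val, f i := by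
  rw [← sum_pair huv]
  exact sum_le_sum_of_subset fun i => by
    simp only [mem_insert, mem_singleton, mem_filter, mem_univ, true_and]
    rintro (rfl | rfl) <;> assumption

lemma partSum_add_sum_ge (a : Fin n → ℕ) (k : ℕ) :
    partSum a k + ∑ i with k ≤ i.val, a i = ∑ i, a i := by
  rw [partSum, ← sum_filter, sum_lt_add_sum_ge]

end splitSums

section block

variable {n : ℕ} {a : Fin n → ℕ} {u : Fin n} {k : ℕ}

lemma sum_lt_eq_mul_of_block (hblock : ∀ i ≤ u, a i = a u) (hku : k ≤ u + 1) (hkn : k ≤ n)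
    (g : ℕ → ℕ) : ∑ i with i.val < k, g (a i) = k * g (a u) := by
  rw [sum_congr rfl fun i hi => by
      rw [hblock i (Fin.le_def.2 (by simp at hi; omega))],
    sum_const, Fin.card_filter_val_lt, smul_eq_mul, min_eq_right hkn]

lemma partSum_of_block (hblock : ∀ i ≤ u, a i = a u) (hku : k ≤ u + 1) (hkn : k ≤ n) :
    partSum a k = k * a u := by
  rw [partSum, ← sum_filter]
  exact sum_lt_eq_mul_of_block hblock hku hkn id

lemma egBound_of_block (hblock : ∀ i ≤ u, a i = a u) (hku : k ≤ u + 1) (hkn : k ≤ n) :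
    egBound a k = k * min (a u) (k - 1) + ∑ i with k ≤ i.val, min (a i) k := by
  rw [egBound, ← sum_lt_add_sum_ge, ← sum_lt_eq_mul_of_block hblock hku hkn (min · (k - 1))]
  congr 1 <;> refine sum_congr rfl fun i hi => ?_ <;> simp only [mem_filter] at hi <;>
    simp [egCap, hi.2, Nat.not_lt.2]

end block

section reduction

variable {n : ℕ} {a : Fin n → ℕ} {u v : Fin n} {k : ℕ}

lemma le_of_block (hmono : Nonincreasing a) (hblock : ∀ i ≤ u, a i = a u) (i : Fin n) :
    a i ≤ a u := by
  rcases le_or_gt i u with h | h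
  · exact (hblock i h).le
  · exact hmono u i h.le

lemma partSum_lt_egBound_of_max_lt (hmono : Nonincreasing a) (hblock : ∀ i ≤ u, a i = a u)
    (hv : 0 < a v) (hA : a u < k) (hkv : k ≤ v) : partSum a k < egBound a k := by
  have hbound : egBound a k = ∑ i, a i := sum_congr rfl fun i _ => by
    have := le_of_block hmono hblock i
    unfold egCap; split_ifs <;> omega
  have htail : a v ≤ ∑ i with k ≤ i.val, a i :=
    single_le_sum (fun _ _ => Nat.zero_le _) (by simpa using hkv)
  have := partSum_add_sum_ge a k
  omega

lemma partSum_add_two_le_egBound (hmono : Nonincreasing a) (heven : Even (∑ i, a i))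
    (hblock : ∀ i ≤ u, a i = a u) (huv : u < v) (hv : 0 < a v) (hku : k ≤ u) (hA : a u ≤ k) :
    partSum a k + 2 ≤ egBound a k := by
  have hkn : k ≤ n := by omega
  have htail : ∑ i with k ≤ i.val, min (a i) k = ∑ i with k ≤ i.val, a i :=
    sum_congr rfl fun i _ => min_eq_left ((le_of_block hmono hblock i).trans hA)
  rw [partSum_of_block hblock (by omega) hkn, egBound_of_block hblock (by omega) hkn, htail]
  have hpair : a u + a v ≤ ∑ i with k ≤ i.val, a i := le_sum_ge_of_ne huv.ne hku (by omega)
  have hsplit := partSum_add_sum_ge a k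
  rw [partSum_of_block hblock (by omega) hkn] at hsplit
  have := hmono u v huv.le
  rcases hA.lt_or_eq with hA | hA
  · rw [min_eq_left (by omega)]
    omega
  · have hsq := Nat.mul_sub_one k k
    have := Nat.le_mul_self k
    have hsucc : k * (k + 1) = k * k + k := by ring
    obtain ⟨c, hc⟩ := heven
    obtain ⟨d, hd⟩ := Nat.even_mul_succ_self k
    rw [hA, min_eq_right (by omega)]
    rw [hA] at hsplit hpair
    omega

lemma partSum_lt_egBound_of_lt_max (hblock : ∀ i ≤ u, a i = a u) (huv : u < v) (hv : 0 < a v)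
    (hEG : ∀ k ≤ n, partSum a k ≤ egBound a k) (hku : k ≤ u) (hkA : k < a u) (hvk : a v ≤ k) :
    partSum a k < egBound a k := by
  have hkn : k < n := by omega
  set P := ∑ i with k + 1 ≤ i.val, min (a i) k
  set Q := ∑ i with k + 1 ≤ i.val, min (a i) (k + 1)
  set q := ∑ i with k + 1 ≤ i.val, if k < a i then 1 else 0
  have hbound : egBound a k = k * (k - 1) + k + P := by
    rw [egBound_of_block hblock (by omega) hkn.le, sum_ge_eq_add_sum_ge_succ hkn,
      hblock ⟨k, hkn⟩ (Fin.le_def.2 hku), min_eq_right (by omega), min_eq_right (by omega),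
      add_assoc]
  have hbound' : egBound a (k + 1) = (k + 1) * k + Q := by
    rw [egBound_of_block (k := k + 1) hblock (by omega) hkn, min_eq_right (by omega),
      Nat.add_sub_cancel]
  have hQ : Q ≤ P + q := by
    rw [← sum_add_distrib]
    exact sum_le_sum fun i _ => by split_ifs <;> omega
  have hP : k * q + a v ≤ P := by
    have hsingle : a v = ∑ i with k + 1 ≤ i.val, if i = v then a v else 0 := by
      rw [sum_ite_eq', if_pos (mem_filter.2 ⟨mem_univ _, by omega⟩)]
    rw [hsingle, mul_sum, ← sum_add_distrib]
    refine sum_le_sum fun i _ => ?_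
    rcases eq_or_ne i v with rfl | hiv
    · rw [if_pos rfl]; split_ifs <;> omega
    · rw [if_neg hiv]; split_ifs <;> omega
  have hEG' := hEG (k + 1) hkn
  rw [partSum_of_block (k := k + 1) hblock (by omega) hkn, hbound'] at hEG'
  rw [partSum_of_block hblock (by omega) hkn.le, hbound]
  have hsq := Nat.mul_sub_one k k
  have := Nat.le_mul_self k
  have h1 : (k + 1) * a u = k * a u + a u := by ring
  have h2 : (k + 1) * k = k * k + k := by ring
  -- Equality at `k` and the inequality at `k + 1` give `a u ≤ k + q`, against `k * q < P`.
  by_contra! hle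
  have hAq : a u ≤ k + q := by omega
  have := Nat.mul_le_mul_left k hAq
  rw [mul_add] at this
  omega

lemma partSum_add_le_egBound_add (hmono : Nonincreasing a) (heven : Even (∑ i, a i))
    (hEG : ∀ k ≤ n, partSum a k ≤ egBound a k) (hblock : ∀ i ≤ u, a i = a u) (huv : u < v)
    (hv : 0 < a v) (hk : k ≤ n) :
    partSum a k + ((if a u ≤ egCap k u then 1 else 0) + (if a v ≤ egCap k v then 1 else 0)) ≤
      egBound a k + ((if (u : ℕ) < k then 1 else 0) + (if (v : ℕ) < k then 1 else 0)) := by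
  have hvu := hmono u v huv.le
  have hEGk := hEG k hk
  have huv' : (u : ℕ) < v := huv
  unfold egCap
  rcases Nat.eq_zero_or_pos k with rfl | hk0
  · split_ifs <;> omega
  by_cases hvk : (v : ℕ) < k
  · split_ifs <;> omega
  by_cases huk : (u : ℕ) < k
  · rcases lt_or_ge (a u) k with hA | hA
    · have := partSum_lt_egBound_of_max_lt hmono hblock hv hA (by omega)
      split_ifs <;> omega
    · split_ifs <;> omega
  rcases le_or_gt (a u) k with hA | hA
  · have := partSum_add_two_le_egBound hmono heven hblock huv hv (by omega) hA
    split_ifs <;> omega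
  rcases le_or_gt (a v) k with hvk' | hvk'
  · have := partSum_lt_egBound_of_lt_max hblock huv hv hEG (by omega) hA hvk'
    split_ifs <;> omega
  · split_ifs <;> omega

lemma partSum_le_egBound_lowerPair (hmono : Nonincreasing a) (heven : Even (∑ i, a i))
    (hEG : ∀ k ≤ n, partSum a k ≤ egBound a k) (hblock : ∀ i ≤ u, a i = a u) (huv : u < v)
    (hv : 0 < a v) (hk : k ≤ n) :
    partSum (lowerPair a u v) k ≤ egBound (lowerPair a u v) k := by
  have hu := hv.trans_le (hmono u v huv.le)
  have := partSum_add_le_egBound_add hmono heven hEG hblock huv hv hk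
  have := partSum_lowerPair huv.ne hu hv k
  have := egBound_lowerPair huv.ne hu hv k
  omega

end reduction

section choice

variable {n : ℕ} {a : Fin n → ℕ}

lemma graphic_of_forall_eq_zero (h : ∀ i, a i = 0) : Graphic a :=
  (graphic_iff_exists_isRealization a).2
    ⟨fun _ _ => false, fun _ _ => rfl, fun _ => rfl, fun i => by simp [rowSum, h]⟩

lemma exists_last_pos (h : ∃ i, 0 < a i) : ∃ v, 0 < a v ∧ ∀ j, v < j → a j = 0 := by
  obtain ⟨i, hi⟩ := h
  have hne : ({i | 0 < a i} : Finset (Fin n)).Nonempty := ⟨i, by simpa using hi⟩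
  refine ⟨_, by simpa using max'_mem _ hne, fun j hj => ?_⟩
  by_contra hpos
  exact (le_max' _ j (by simpa [Nat.pos_iff_ne_zero] using hpos)).not_gt hj

lemma le_of_partSum_one_le_egBound (hmono : Nonincreasing a) {v : Fin n}
    (hzero : ∀ j, v < j → a j = 0) (hEG : partSum a 1 ≤ egBound a 1) (i : Fin n) :
    a i ≤ v := by
  let i₀ : Fin n := ⟨0, i.pos⟩
  have hfirst : a i₀ ≤ partSum a 1 := by
    have := single_le_sum (f := fun i : Fin n => if (i : ℕ) < 1 then a i else 0)
      (fun _ _ => Nat.zero_le _) (mem_univ i₀)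
    rwa [if_pos Nat.one_pos] at this
  have hbound : egBound a 1 ≤ #((Iic v).erase i₀) := by
    rw [card_eq_sum_ones, ← univ_inter ((Iic v).erase i₀), ← sum_ite_mem]
    refine sum_le_sum fun j _ => ?_
    by_cases hj : j ∈ (Iic v).erase i₀
    · rw [if_pos hj]
      exact (min_le_right _ _).trans (by unfold egCap; split_ifs <;> omega)
    · rw [if_neg hj]
      simp only [mem_erase, mem_Iic, not_and_or, not_not, not_le] at hj
      rcases hj with rfl | hj
      · simp [egCap, i₀]
      · simp [hzero j hj]
  rw [card_erase_of_mem (mem_Iic.2 (Fin.le_def.2 (Nat.zero_le _))), Fin.card_Iic] at hbound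
  have := hmono i₀ i (Fin.le_def.2 (Nat.zero_le _))
  omega

lemma exists_block_end (hmono : Nonincreasing a) {v : Fin n} (hv : 0 < (v : ℕ)) :
    ∃ u < v, (∀ i ≤ u, a i = a u) ∧ ∀ j < v, u < j → a j < a u := by
  let i₀ : Fin n := ⟨0, by omega⟩
  have hi₀ (i : Fin n) : i₀ ≤ i := Fin.le_def.2 (Nat.zero_le _)
  let S : Finset (Fin n) := {i | i < v ∧ a i = a i₀}
  have hS : S.Nonempty := ⟨i₀, mem_filter.2 ⟨mem_univ _, Fin.lt_def.2 hv, rfl⟩⟩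
  obtain ⟨huv, hu⟩ : S.max' hS < v ∧ a (S.max' hS) = a i₀ := by
    simpa [S] using max'_mem S hS
  refine ⟨S.max' hS, huv, fun i hi => ?_, fun j hjv huj => ?_⟩
  · have := hmono _ _ hi
    have := hmono _ _ (hi₀ i)
    omega
  · by_contra! hle
    have hj : j ∈ S := by
      have := hmono _ _ (hi₀ j)
      simp only [S, mem_filter, mem_univ, true_and]
      exact ⟨hjv, by omega⟩
    exact (le_max' S j hj).not_gt huj

end choice

theorem graphic_of_partSum_le_egBound {n : ℕ} {a : Fin n → ℕ} (hmono : Nonincreasing a)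
    (heven : Even (∑ i, a i)) (hEG : ∀ k ≤ n, partSum a k ≤ egBound a k) : Graphic a := by
  induction hs : ∑ i, a i using Nat.strong_induction_on generalizing a with
  | _ s ih =>
  by_cases hpos : ∃ i, 0 < a i
  swap
  · exact graphic_of_forall_eq_zero fun i => Nat.eq_zero_of_not_pos fun h => hpos ⟨i, h⟩
  obtain ⟨v, hv, hzero⟩ := exists_last_pos hpos
  have hle := le_of_partSum_one_le_egBound hmono hzero (hEG 1 (by have := v.pos; omega))
  obtain ⟨u, huv, hblock, hdrop⟩ := exists_block_end hmono (hv.trans_le (hle v))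
  have hu : 0 < a u := hv.trans_le (hmono u v huv.le)
  have hsum := sum_lowerPair huv.ne hu hv
  refine graphic_of_graphic_lowerPair hmono huv hv (hle u) (ih _ (by omega)
    (nonincreasing_lowerPair hmono huv hdrop hzero) ?_
    (fun k hk => partSum_le_egBound_lowerPair hmono heven hEG hblock huv hv hk) rfl)
  obtain ⟨c, hc⟩ := heven
  exact ⟨c - 1, by omega⟩

theorem stmt7 {n : ℕ} (a : Fin n → ℕ)
    (hmono : Nonincreasing a) (heven : Even (∑ i, a i)) :
    Graphic a ↔ Majorized a (thresholdList a) := by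
  rw [majorized_thresholdList_iff]
  exact ⟨fun h k _ => partSum_le_egBound_of_graphic h k,
    graphic_of_partSum_le_egBound hmono heven⟩
end

section
/- Let (a,b) and (a',b) be two different lists of n pairs of nonnegative integers such that a' yields a by a unit (i,j)-transfer (i.e., a'_i ≥ a'_j + 2 and a = a' − e_i + e_j). Then the number N_1(a,b) of loop-digraph realizations (n×n 0-1 matrices with row sums b and column sums a) is at least N_1(a',b); and if (a',b) is loop-digraphic then N_1(a,b) > N_1(a',b). -/
open Finset

namespace Stmt9
variable {n : ℕ} (i j : Fin n)
def chi (M : Fin n → Fin n → Bool) (r : Fin n) : ℤ :=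
  (if M r i then 1 else 0) - (if M r j then 1 else 0)
def F (M : Fin n → Fin n → Bool) (s : ℕ) : ℤ :=
  ∑ r ∈ Finset.univ.filter (fun r : Fin n => s ≤ (r : ℕ)), chi i j M r
def setRow (M : Fin n → Fin n → Bool) (r : Fin n) (v w : Bool) : Fin n → Fin n → Bool :=
  fun p q => if p = r then (if q = i then v else if q = j then w else M p q) else M p q

lemma chi_le_one (M : Fin n → Fin n → Bool) (r : Fin n) : chi i j M r ≤ 1 := by
  unfold chi; split <;> split <;> omega

lemma neg_one_le_chi (M : Fin n → Fin n → Bool) (r : Fin n) : -1 ≤ chi i j M r := by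
  unfold chi; split <;> split <;> omega

lemma chi_eq_one_iff (M : Fin n → Fin n → Bool) (r : Fin n) :
    chi i j M r = 1 ↔ (M r i = true ∧ M r j = false) := by
  unfold chi
  rcases h1 : M r i <;> rcases h2 : M r j <;> simp

lemma chi_eq_neg_one_iff (M : Fin n → Fin n → Bool) (r : Fin n) :
    chi i j M r = -1 ↔ (M r i = false ∧ M r j = true) := by
  unfold chi
  rcases h1 : M r i <;> rcases h2 : M r j <;> simp

lemma setRow_apply_ne (M : Fin n → Fin n → Bool) (r : Fin n) (v w : Bool)
    (p : Fin n) (hp : p ≠ r) (q : Fin n) : setRow i j M r v w p q = M p q := by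
  simp [setRow, hp]
lemma setRow_apply_i (M : Fin n → Fin n → Bool) (r : Fin n) (v w : Bool) :
    setRow i j M r v w r i = v := by simp [setRow]
lemma setRow_apply_j (hij : i ≠ j) (M : Fin n → Fin n → Bool) (r : Fin n) (v w : Bool) :
    setRow i j M r v w r j = w := by simp [setRow, hij.symm]
lemma setRow_apply_other (M : Fin n → Fin n → Bool) (r : Fin n) (v w : Bool)
    (q : Fin n) (hqi : q ≠ i) (hqj : q ≠ j) : setRow i j M r v w r q = M r q := by
  simp [setRow, hqi, hqj]

lemma rowSum_setRow_ne (M : Fin n → Fin n → Bool) (r : Fin n) (v w : Bool)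
    (p : Fin n) (hp : p ≠ r) : rowSum (setRow i j M r v w) p = rowSum M p := by
  unfold rowSum
  exact Finset.sum_congr rfl fun q _ => by rw [setRow_apply_ne i j M r v w p hp q]

lemma rowSum_split (hij : i ≠ j) (f : Fin n → ℕ) :
    ∑ q, f q = (∑ q ∈ (Finset.univ.erase i).erase j, f q) + f j + f i := by
  rw [Finset.sum_erase_add _ _ (Finset.mem_erase.mpr ⟨hij.symm, Finset.mem_univ j⟩),
    Finset.sum_erase_add _ _ (Finset.mem_univ i)]

lemma rowSum_setRow_self (hij : i ≠ j) (M : Fin n → Fin n → Bool) (r : Fin n) (v w : Bool)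
    (h : ((if v then 1 else 0) + (if w then 1 else 0) : ℕ)
       = (if M r i then 1 else 0) + (if M r j then 1 else 0)) :
    rowSum (setRow i j M r v w) r = rowSum M r := by
  unfold rowSum
  rw [rowSum_split i j hij, rowSum_split i j hij (fun q => if M r q then 1 else 0)]
  rw [setRow_apply_i, setRow_apply_j i j hij]
  have : ∀ q ∈ (Finset.univ.erase i).erase j,
      (if setRow i j M r v w r q then 1 else 0) = (if M r q then (1:ℕ) else 0) := by
    intro q hq
    rw [Finset.mem_erase, Finset.mem_erase] at hq
    rw [setRow_apply_other i j M r v w q hq.2.1 hq.1]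
  rw [Finset.sum_congr rfl this]
  omega

lemma colSum_setRow_add (M : Fin n → Fin n → Bool) (r : Fin n) (v w : Bool) (q : Fin n) :
    colSum (setRow i j M r v w) q + (if M r q then 1 else 0)
      = colSum M q + (if setRow i j M r v w r q then 1 else 0) := by
  unfold colSum
  rw [← Finset.sum_erase_add _ _ (Finset.mem_univ r),
    ← Finset.sum_erase_add _ (fun p => if M p q then (1:ℕ) else 0) (Finset.mem_univ r)]
  have : ∀ p ∈ Finset.univ.erase r,
      (if setRow i j M r v w p q then 1 else 0) = (if M p q then (1:ℕ) else 0) := by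
    intro p hp
    rw [setRow_apply_ne i j M r v w p (Finset.mem_erase.mp hp).1 q]
  rw [Finset.sum_congr rfl this]
  omega

lemma colSum_setRow_other (M : Fin n → Fin n → Bool) (r : Fin n) (v w : Bool)
    (q : Fin n) (hqi : q ≠ i) (hqj : q ≠ j) :
    colSum (setRow i j M r v w) q = colSum M q := by
  unfold colSum
  refine Finset.sum_congr rfl fun p _ => ?_
  by_cases hp : p = r
  · rw [hp, setRow_apply_other i j M r v w q hqi hqj]
  · rw [setRow_apply_ne i j M r v w p hp q]

lemma chi_setRow_ne (M : Fin n → Fin n → Bool) (r : Fin n) (v w : Bool)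
    (p : Fin n) (hp : p ≠ r) : chi i j (setRow i j M r v w) p = chi i j M p := by
  unfold chi; rw [setRow_apply_ne i j M r v w p hp, setRow_apply_ne i j M r v w p hp]

lemma chi_setRow_self (hij : i ≠ j) (M : Fin n → Fin n → Bool) (r : Fin n) (v w : Bool) :
    chi i j (setRow i j M r v w) r = (if v then 1 else 0) - (if w then 1 else 0) := by
  unfold chi; rw [setRow_apply_i, setRow_apply_j i j hij]

lemma F_setRow (hij : i ≠ j) (M : Fin n → Fin n → Bool) (r : Fin n) (v w : Bool) (s : ℕ) :
    F i j (setRow i j M r v w) s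
      = F i j M s + (if s ≤ (r:ℕ)
          then ((if v then 1 else 0) - (if w then 1 else 0) - chi i j M r) else 0) := by
  unfold F
  have h1 : ∀ p ∈ Finset.univ.filter (fun r : Fin n => s ≤ (r : ℕ)),
      chi i j (setRow i j M r v w) p = chi i j M p
        + (if p = r then ((if v then 1 else 0) - (if w then 1 else 0) - chi i j M r) else 0) := by
    intro p _
    by_cases hp : p = r
    · rw [hp, chi_setRow_self i j hij, if_pos rfl]; ring
    · rw [chi_setRow_ne i j M r v w p hp, if_neg hp]; ring
  rw [Finset.sum_congr rfl h1, Finset.sum_add_distrib, Finset.sum_ite_eq']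
  congr 1
  simp


lemma F_of_ge (M : Fin n → Fin n → Bool) (s : ℕ) (h : n ≤ s) : F i j M s = 0 := by
  unfold F
  rw [Finset.filter_false_of_mem, Finset.sum_empty]
  intro r _
  have := r.2
  omega

lemma F_succ (M : Fin n → Fin n → Bool) (s : ℕ) (h : s < n) :
    F i j M s = chi i j M ⟨s, h⟩ + F i j M (s + 1) := by
  unfold F
  have hset : Finset.univ.filter (fun r : Fin n => s ≤ (r : ℕ))
      = insert ⟨s, h⟩ (Finset.univ.filter (fun r : Fin n => s + 1 ≤ (r : ℕ))) := by
    ext p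
    simp only [Finset.mem_filter, Finset.mem_univ, true_and, Finset.mem_insert, Fin.ext_iff]
    omega
  rw [hset, Finset.sum_insert (by simp)]

lemma F_zero (M : Fin n → Fin n → Bool) :
    F i j M 0 = (colSum M i : ℤ) - (colSum M j : ℤ) := by
  unfold F chi colSum
  rw [Finset.filter_true_of_mem (by intro r _; omega), Finset.sum_sub_distrib]
  push_cast
  rfl

lemma F_split (M : Fin n → Fin n → Bool) (s : ℕ) :
    F i j M 0 = (∑ r ∈ Finset.univ.filter (fun r : Fin n => ¬ (s ≤ (r : ℕ))), chi i j M r)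
      + F i j M s := by
  unfold F
  rw [Finset.filter_true_of_mem (by intro r _; omega)]
  rw [← Finset.sum_filter_add_sum_filter_not Finset.univ (fun r : Fin n => s ≤ (r : ℕ))]
  ring


lemma setRow_setRow (M : Fin n → Fin n → Bool) (r : Fin n) (v w v' w' : Bool) :
    setRow i j (setRow i j M r v w) r v' w' = setRow i j M r v' w' := by
  funext p q
  by_cases hp : p = r
  · by_cases hqi : q = i <;> by_cases hqj : q = j <;> simp [setRow, hp, hqi, hqj]
  · simp [setRow, hp]

lemma setRow_self (hij : i ≠ j) (M : Fin n → Fin n → Bool) (r : Fin n) :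
    setRow i j M r (M r i) (M r j) = M := by
  funext p q
  by_cases hp : p = r
  · subst hp
    by_cases hqi : q = i
    · rw [hqi, setRow_apply_i]
    · by_cases hqj : q = j
      · rw [hqj, setRow_apply_j i j hij]
      · rw [setRow_apply_other i j M p _ _ q hqi hqj]
  · rw [setRow_apply_ne i j M r _ _ p hp q]

def argmaxSet (M : Fin n → Fin n → Bool) : Finset ℕ :=
  @Finset.filter _ (fun s => ∀ t ∈ Finset.range (n+1), F i j M t ≤ F i j M s)
    (fun _ => Finset.decidableDforallFinset) (Finset.range (n+1))

lemma mem_argmaxSet (M : Fin n → Fin n → Bool) (s : ℕ) :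
    s ∈ argmaxSet i j M
      ↔ s ∈ Finset.range (n+1) ∧ ∀ t ∈ Finset.range (n+1), F i j M t ≤ F i j M s := by
  unfold argmaxSet
  rw [Finset.mem_filter]

lemma argmaxSet_nonempty (M : Fin n → Fin n → Bool) : (argmaxSet i j M).Nonempty := by
  obtain ⟨b, hb, hmax⟩ := Finset.exists_max_image (Finset.range (n+1)) (F i j M)
    ⟨0, Finset.mem_range.mpr (by omega)⟩
  exact ⟨b, (mem_argmaxSet i j M b).mpr ⟨hb, hmax⟩⟩

def lastArgmax (M : Fin n → Fin n → Bool) : ℕ :=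
  (argmaxSet i j M).max' (argmaxSet_nonempty i j M)

def firstArgmax (M : Fin n → Fin n → Bool) : ℕ :=
  (argmaxSet i j M).min' (argmaxSet_nonempty i j M)

lemma lastArgmax_spec (M : Fin n → Fin n → Bool) :
    lastArgmax i j M ∈ Finset.range (n+1)
      ∧ ∀ t ∈ Finset.range (n+1), F i j M t ≤ F i j M (lastArgmax i j M) := by
  exact (mem_argmaxSet i j M _).mp ((argmaxSet i j M).max'_mem (argmaxSet_nonempty i j M))

lemma firstArgmax_spec (M : Fin n → Fin n → Bool) :
    firstArgmax i j M ∈ Finset.range (n+1)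
      ∧ ∀ t ∈ Finset.range (n+1), F i j M t ≤ F i j M (firstArgmax i j M) := by
  exact (mem_argmaxSet i j M _).mp ((argmaxSet i j M).min'_mem (argmaxSet_nonempty i j M))

lemma lt_of_gt_lastArgmax (M : Fin n → Fin n → Bool) (t : ℕ)
    (ht : t ∈ Finset.range (n+1)) (h : lastArgmax i j M < t) :
    F i j M t < F i j M (lastArgmax i j M) := by
  have hnm : t ∉ argmaxSet i j M := by
    intro hmem
    have h2 : t ≤ lastArgmax i j M := Finset.le_max' _ t hmem
    omega
  rw [mem_argmaxSet] at hnm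
  push_neg at hnm
  obtain ⟨u, hu, hlt⟩ := hnm ht
  exact lt_of_lt_of_le hlt ((lastArgmax_spec i j M).2 u hu)

lemma lastArgmax_lt (M : Fin n → Fin n → Bool) (hM : 0 < F i j M 0) :
    lastArgmax i j M < n := by
  obtain ⟨hmem, hmax⟩ := lastArgmax_spec i j M
  rw [Finset.mem_range] at hmem
  rcases Nat.lt_or_ge (lastArgmax i j M) n with h | h
  · exact h
  · exfalso
    have h0 := hmax 0 (Finset.mem_range.mpr (by omega))
    rw [F_of_ge i j M _ h] at h0
    omega

lemma chi_lastArgmax (M : Fin n → Fin n → Bool) (hM : 0 < F i j M 0) :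
    chi i j M ⟨lastArgmax i j M, lastArgmax_lt i j M hM⟩ = 1
      ∧ F i j M (lastArgmax i j M + 1) = F i j M (lastArgmax i j M) - 1 := by
  have hlt := lastArgmax_lt i j M hM
  have hsucc := F_succ i j M (lastArgmax i j M) hlt
  have hstrict := lt_of_gt_lastArgmax i j M (lastArgmax i j M + 1)
    (Finset.mem_range.mpr (by omega)) (by omega)
  have h1 := chi_le_one i j M ⟨lastArgmax i j M, hlt⟩
  constructor <;> omega


def fmap (M : Fin n → Fin n → Bool) : Fin n → Fin n → Bool :=
  if h : lastArgmax i j M < n then setRow i j M ⟨lastArgmax i j M, h⟩ false true else M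

def emap (N : Fin n → Fin n → Bool) : Fin n → Fin n → Bool :=
  if h : firstArgmax i j N - 1 < n then setRow i j N ⟨firstArgmax i j N - 1, h⟩ true false else N

variable {i j}

lemma fmap_eq (M : Fin n → Fin n → Bool) (hM : 0 < F i j M 0) :
    fmap i j M = setRow i j M ⟨lastArgmax i j M, lastArgmax_lt i j M hM⟩ false true := by
  rw [fmap, dif_pos (lastArgmax_lt i j M hM)]

lemma F_fmap (M : Fin n → Fin n → Bool) (hM : 0 < F i j M 0) (hij : i ≠ j) (s : ℕ) :
    F i j (fmap i j M) s = F i j M s + (if s ≤ lastArgmax i j M then -2 else 0) := by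
  rw [fmap_eq M hM, F_setRow i j hij]
  have hchi := (chi_lastArgmax i j M hM).1
  congr 1
  split <;> [skip; rfl]
  rw [hchi]
  norm_num

lemma firstArgmax_fmap (M : Fin n → Fin n → Bool) (hM : 0 < F i j M 0) (hij : i ≠ j) :
    firstArgmax i j (fmap i j M) = lastArgmax i j M + 1 := by
  have hr : lastArgmax i j M < n := lastArgmax_lt i j M hM
  have hFsucc := (chi_lastArgmax i j M hM).2
  have hFN : ∀ s, F i j (fmap i j M) s = F i j M s + (if s ≤ (lastArgmax i j M) then -2 else 0) :=
    F_fmap M hM hij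
  have hN1 : F i j (fmap i j M) ((lastArgmax i j M) + 1) = F i j M (lastArgmax i j M) - 1 := by
    rw [hFN, if_neg (by omega)]
    omega
  have key1 : ∀ t ∈ Finset.range (n+1),
      F i j (fmap i j M) t ≤ F i j (fmap i j M) ((lastArgmax i j M) + 1) := by
    intro t ht
    rw [hN1, hFN]
    by_cases h : t ≤ (lastArgmax i j M)
    · rw [if_pos h]
      have := (lastArgmax_spec i j M).2 t ht
      omega
    · rw [if_neg h]
      have := lt_of_gt_lastArgmax i j M t ht (by omega)
      omega
  have mem1 : (lastArgmax i j M) + 1 ∈ argmaxSet i j (fmap i j M) :=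
    (mem_argmaxSet i j _ _).mpr ⟨Finset.mem_range.mpr (by omega), key1⟩
  have key2 : ∀ t ∈ argmaxSet i j (fmap i j M), (lastArgmax i j M) + 1 ≤ t := by
    intro t ht
    rw [mem_argmaxSet] at ht
    by_contra hcon
    have hle : t ≤ (lastArgmax i j M) := by omega
    have h1 := ht.2 ((lastArgmax i j M) + 1) (Finset.mem_range.mpr (by omega))
    rw [hN1, hFN, if_pos hle] at h1
    have := (lastArgmax_spec i j M).2 t ht.1
    omega
  exact le_antisymm (Finset.min'_le _ _ mem1) (Finset.le_min' _ _ _ key2)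

lemma emap_fmap (M : Fin n → Fin n → Bool) (hM : 0 < F i j M 0) (hij : i ≠ j) :
    emap i j (fmap i j M) = M := by
  have hr : lastArgmax i j M < n := lastArgmax_lt i j M hM
  have hchi := (chi_eq_one_iff i j M ⟨lastArgmax i j M, hr⟩).mp (chi_lastArgmax i j M hM).1
  have h1 : emap i j (fmap i j M)
      = setRow i j (fmap i j M) ⟨lastArgmax i j M, hr⟩ true false := by
    rw [emap, firstArgmax_fmap M hM hij]
    simp only [Nat.add_sub_cancel]
    rw [dif_pos hr]
  rw [h1, fmap_eq M hM, setRow_setRow]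
  calc setRow i j M ⟨lastArgmax i j M, hr⟩ true false
      = setRow i j M ⟨lastArgmax i j M, hr⟩
          (M ⟨lastArgmax i j M, hr⟩ i) (M ⟨lastArgmax i j M, hr⟩ j) := by
        rw [hchi.1, hchi.2]
    _ = M := setRow_self i j hij M _

lemma fmap_rowSum (M : Fin n → Fin n → Bool) (hM : 0 < F i j M 0) (hij : i ≠ j) (p : Fin n) :
    rowSum (fmap i j M) p = rowSum M p := by
  rw [fmap_eq M hM]
  set r : Fin n := ⟨lastArgmax i j M, lastArgmax_lt i j M hM⟩
  by_cases hp : p = r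
  · rw [hp]
    have hchi := (chi_eq_one_iff i j M r).mp (chi_lastArgmax i j M hM).1
    exact rowSum_setRow_self i j hij M r false true (by rw [hchi.1, hchi.2]; simp)
  · exact rowSum_setRow_ne i j M r false true p hp

lemma fmap_colSum_other (M : Fin n → Fin n → Bool) (hM : 0 < F i j M 0)
    (q : Fin n) (hqi : q ≠ i) (hqj : q ≠ j) : colSum (fmap i j M) q = colSum M q := by
  rw [fmap_eq M hM]
  exact colSum_setRow_other i j M _ false true q hqi hqj

lemma fmap_colSum_i (M : Fin n → Fin n → Bool) (hM : 0 < F i j M 0) :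
    colSum (fmap i j M) i + 1 = colSum M i := by
  rw [fmap_eq M hM]
  set r : Fin n := ⟨lastArgmax i j M, lastArgmax_lt i j M hM⟩
  have hchi := (chi_eq_one_iff i j M r).mp (chi_lastArgmax i j M hM).1
  have := colSum_setRow_add i j M r false true i
  rw [hchi.1, setRow_apply_i] at this
  simpa using this

lemma fmap_colSum_j (M : Fin n → Fin n → Bool) (hM : 0 < F i j M 0) (hij : i ≠ j) :
    colSum (fmap i j M) j = colSum M j + 1 := by
  rw [fmap_eq M hM]
  set r : Fin n := ⟨lastArgmax i j M, lastArgmax_lt i j M hM⟩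
  have hchi := (chi_eq_one_iff i j M r).mp (chi_lastArgmax i j M hM).1
  have := colSum_setRow_add i j M r false true j
  rw [hchi.2, setRow_apply_j i j hij] at this
  simpa using this


variable (i j)

def swap2 (N : Fin n → Fin n → Bool) (r t : Fin n) : Fin n → Fin n → Bool :=
  setRow i j (setRow i j N t false true) r true false

variable {i j}

section Swap

variable (hij : i ≠ j) (N : Fin n → Fin n → Bool) (r t : Fin n)
  (hr : chi i j N r = -1) (ht : chi i j N t = 1) (hrt : r ≠ t)

include hij hr ht hrt

lemma swap2_rowSum (p : Fin n) : rowSum (swap2 i j N r t) p = rowSum N p := by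
  have hNt := (chi_eq_one_iff i j N t).mp ht
  have hNr := (chi_eq_neg_one_iff i j N r).mp hr
  unfold swap2
  by_cases hp2 : p = r
  · subst hp2
    have h1 : setRow i j N t false true p i = N p i := setRow_apply_ne i j N t _ _ p hrt i
    have h2 : setRow i j N t false true p j = N p j := setRow_apply_ne i j N t _ _ p hrt j
    rw [rowSum_setRow_self i j hij _ p true false
      (by rw [h1, h2, hNr.1, hNr.2]; simp), rowSum_setRow_ne i j N t _ _ p hrt]
  · rw [rowSum_setRow_ne i j _ r _ _ p hp2]
    by_cases hp3 : p = t
    · subst hp3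
      exact rowSum_setRow_self i j hij N p false true (by rw [hNt.1, hNt.2]; simp)
    · exact rowSum_setRow_ne i j N t _ _ p hp3

lemma swap2_colSum (q : Fin n) : colSum (swap2 i j N r t) q = colSum N q := by
  have hNt := (chi_eq_one_iff i j N t).mp ht
  have hNr := (chi_eq_neg_one_iff i j N r).mp hr
  unfold swap2
  by_cases hqi : q = i
  · rw [hqi]
    have e1 := colSum_setRow_add i j N t false true i
    rw [hNt.1, setRow_apply_i] at e1
    have e2 := colSum_setRow_add i j (setRow i j N t false true) r true false i
    rw [setRow_apply_ne i j N t _ _ r hrt i, hNr.1, setRow_apply_i] at e2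
    simp only [if_true, if_false] at e1 e2
    omega
  · by_cases hqj : q = j
    · rw [hqj]
      have e1 := colSum_setRow_add i j N t false true j
      rw [hNt.2, setRow_apply_j i j hij] at e1
      have e2 := colSum_setRow_add i j (setRow i j N t false true) r true false j
      rw [setRow_apply_ne i j N t _ _ r hrt j, hNr.2, setRow_apply_j i j hij] at e2
      simp only [if_true, if_false] at e1 e2
      omega
    · rw [colSum_setRow_other i j _ r _ _ q hqi hqj,
        colSum_setRow_other i j N t _ _ q hqi hqj]

lemma swap2_F (s : ℕ) :
    F i j (swap2 i j N r t) s
      = F i j N s + (if s ≤ (r:ℕ) then 2 else 0) + (if s ≤ (t:ℕ) then -2 else 0) := by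
  unfold swap2
  have hchi1 : chi i j (setRow i j N t false true) r = -1 := by
    rw [chi_setRow_ne i j N t _ _ r hrt]; exact hr
  rw [F_setRow i j hij, F_setRow i j hij, hchi1, ht]
  have h2 : ((if true then (1:ℤ) else 0) - (if false then 1 else 0) - (-1)) = 2 := by norm_num
  have h3 : ((if false then (1:ℤ) else 0) - (if true then 1 else 0) - 1) = -2 := by norm_num
  rw [h2, h3]
  split <;> split <;> ring

end Swap

end Stmt9


theorem stmt9 {n : ℕ} (a a' b : Fin n → ℕ) (i j : Fin n)
    (hne : a ≠ a') (ht : UnitTransfer a' a i j) :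
    N1 a' b ≤ N1 a b ∧ (LoopDigraphic a' b → N1 a' b < N1 a b) := by
  obtain ⟨hlt, hab, ha⟩ := ht
  have hij : i ≠ j := Fin.ne_of_lt hlt
  have hai : a i = a' i - 1 := by
    rw [ha, Function.update_of_ne hij, Function.update_self]
  have haj : a j = a' j + 1 := by rw [ha, Function.update_self]
  have hak : ∀ q : Fin n, q ≠ i → q ≠ j → a q = a' q := by
    intro q hqi hqj
    rw [ha, Function.update_of_ne hqj, Function.update_of_ne hqi]
  have hF0' : ∀ M : Fin n → Fin n → Bool, (∀ q, colSum M q = a' q) →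
      Stmt9.F i j M 0 = (a' i : ℤ) - a' j := by
    intro M hM; rw [Stmt9.F_zero, hM i, hM j]
  have hpos' : ∀ M : Fin n → Fin n → Bool, (∀ q, colSum M q = a' q) →
      0 < Stmt9.F i j M 0 := by
    intro M hM
    rw [hF0' M hM]
    have : (a' j : ℤ) + 2 ≤ (a' i : ℤ) := by exact_mod_cast hab
    omega
  have hF0 : ∀ N : Fin n → Fin n → Bool, (∀ q, colSum N q = a q) →
      Stmt9.F i j N 0 = (a' i : ℤ) - a' j - 2 := by
    intro N hN
    rw [Stmt9.F_zero, hN i, hN j, hai, haj]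
    have h2 : (2:ℕ) ≤ a' i := by omega
    rw [Nat.cast_sub (by omega)]
    push_cast
    ring
  have hmem : ∀ M : Fin n → Fin n → Bool,
      ((∀ p, rowSum M p = b p) ∧ (∀ q, colSum M q = a' q)) →
      ((∀ p, rowSum (Stmt9.fmap i j M) p = b p) ∧
        (∀ q, colSum (Stmt9.fmap i j M) q = a q)) := by
    intro M hM
    have hp := hpos' M hM.2
    constructor
    · intro p; rw [Stmt9.fmap_rowSum M hp hij p]; exact hM.1 p
    · intro q
      by_cases hqi : q = i
      · rw [hqi, hai]
        have h1 := Stmt9.fmap_colSum_i M hp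
        rw [hM.2 i] at h1
        omega
      · by_cases hqj : q = j
        · rw [hqj, haj, Stmt9.fmap_colSum_j M hp hij, hM.2 j]
        · rw [Stmt9.fmap_colSum_other M hp q hqi hqj, hM.2 q, hak q hqi hqj]
  let φ : {M : Fin n → Fin n → Bool //
        (∀ p, rowSum M p = b p) ∧ (∀ q, colSum M q = a' q)} →
      {M : Fin n → Fin n → Bool //
        (∀ p, rowSum M p = b p) ∧ (∀ q, colSum M q = a q)} :=
    fun M => ⟨Stmt9.fmap i j M.1, hmem M.1 M.2⟩
  have hinj : Function.Injective φ := by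
    intro M1 M2 h
    have h1 : Stmt9.fmap i j M1.1 = Stmt9.fmap i j M2.1 := congrArg Subtype.val h
    apply Subtype.ext
    rw [← Stmt9.emap_fmap M1.1 (hpos' _ M1.2.2) hij,
      ← Stmt9.emap_fmap M2.1 (hpos' _ M2.2.2) hij, h1]
  constructor
  · unfold N1
    rw [Nat.card_eq_fintype_card, Nat.card_eq_fintype_card]
    exact Fintype.card_le_of_injective φ hinj
  · intro hLD
    unfold LoopDigraphic N1 at hLD
    unfold N1
    rw [Nat.card_eq_fintype_card] at hLD
    rw [Nat.card_eq_fintype_card, Nat.card_eq_fintype_card]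
    have hne' := Fintype.card_pos_iff.mp hLD
    obtain ⟨M₀⟩ := hne'
    obtain ⟨Nm, _, hmin⟩ := Finset.exists_min_image Finset.univ
      (fun N : {M : Fin n → Fin n → Bool //
          (∀ p, rowSum M p = b p) ∧ (∀ q, colSum M q = a q)} =>
        ∑ s ∈ Finset.range (n+1), Stmt9.F i j N.1 s)
      ⟨φ M₀, Finset.mem_univ _⟩
    have hNm : ∀ s ∈ Finset.range (n+1), Stmt9.F i j Nm.1 s ≤ Stmt9.F i j Nm.1 0 := by
      by_contra hcon
      push_neg at hcon
      obtain ⟨s, hs, hgt⟩ := hcon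
      have hF0N : Stmt9.F i j Nm.1 0 = (a' i : ℤ) - a' j - 2 := hF0 Nm.1 Nm.2.2
      have hge0 : 0 ≤ Stmt9.F i j Nm.1 0 := by
        rw [hF0N]
        have : (a' j : ℤ) + 2 ≤ (a' i : ℤ) := by exact_mod_cast hab
        omega
      have hsplit := Stmt9.F_split i j Nm.1 s
      have heq : Finset.univ.filter (fun r : Fin n => ¬ (s ≤ (r:ℕ)))
          = Finset.univ.filter (fun r : Fin n => (r:ℕ) < s) := by
        apply Finset.filter_congr
        intro x _
        simp only [not_le]
      rw [heq] at hsplit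
      have hexr : ∃ r ∈ Finset.univ.filter (fun r : Fin n => (r:ℕ) < s),
          Stmt9.chi i j Nm.1 r < 0 := by
        by_contra hc
        push_neg at hc
        have := Finset.sum_nonneg hc
        omega
      obtain ⟨r, hrmem, hrneg⟩ := hexr
      have hrchi : Stmt9.chi i j Nm.1 r = -1 := by
        have := Stmt9.neg_one_le_chi i j Nm.1 r; omega
      have hrlt : (r:ℕ) < s := (Finset.mem_filter.mp hrmem).2
      have hext : ∃ t ∈ Finset.univ.filter (fun r : Fin n => s ≤ (r:ℕ)),
          0 < Stmt9.chi i j Nm.1 t := by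
        by_contra hc
        push_neg at hc
        have : Stmt9.F i j Nm.1 s ≤ 0 := Finset.sum_nonpos hc
        omega
      obtain ⟨t, htmem, htpos⟩ := hext
      have htchi : Stmt9.chi i j Nm.1 t = 1 := by
        have := Stmt9.chi_le_one i j Nm.1 t; omega
      have htge : s ≤ (t:ℕ) := (Finset.mem_filter.mp htmem).2
      have hrt : r ≠ t := by
        intro h; rw [h] at hrlt; omega
      have hswP : (∀ p, rowSum (Stmt9.swap2 i j Nm.1 r t) p = b p) ∧
          (∀ q, colSum (Stmt9.swap2 i j Nm.1 r t) q = a q) := by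
        constructor
        · intro p
          rw [Stmt9.swap2_rowSum hij Nm.1 r t hrchi htchi hrt p]
          exact Nm.2.1 p
        · intro q
          rw [Stmt9.swap2_colSum hij Nm.1 r t hrchi htchi hrt q]
          exact Nm.2.2 q
      have hlt2 : (∑ s' ∈ Finset.range (n+1), Stmt9.F i j (Stmt9.swap2 i j Nm.1 r t) s')
          < ∑ s' ∈ Finset.range (n+1), Stmt9.F i j Nm.1 s' := by
        apply Finset.sum_lt_sum
        · intro u _
          rw [Stmt9.swap2_F hij Nm.1 r t hrchi htchi hrt u]
          by_cases h1 : u ≤ (r:ℕ) <;> by_cases h2 : u ≤ (t:ℕ) <;>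
            simp only [h1, h2, if_true, if_false] <;> omega
        · refine ⟨(r:ℕ)+1, Finset.mem_range.mpr (by have := r.2; omega), ?_⟩
          rw [Stmt9.swap2_F hij Nm.1 r t hrchi htchi hrt]
          rw [if_neg (by omega), if_pos (by omega)]
          omega
      have hcontr := hmin ⟨Stmt9.swap2 i j Nm.1 r t, hswP⟩ (Finset.mem_univ _)
      simp only at hcontr
      linarith
    have hNoImg : Nm ∉ Set.range φ := by
      rintro ⟨M, hMeq⟩
      have hp := hpos' M.1 M.2.2
      have hlast := Stmt9.lastArgmax_lt i j M.1 hp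
      have h1 := hNm (Stmt9.lastArgmax i j M.1 + 1) (Finset.mem_range.mpr (by omega))
      have hNmval : Nm.1 = Stmt9.fmap i j M.1 := by rw [← hMeq]
      rw [hNmval, Stmt9.F_fmap M.1 hp hij, Stmt9.F_fmap M.1 hp hij,
        if_neg (by omega), if_pos (by omega)] at h1
      have h2 := (Stmt9.chi_lastArgmax i j M.1 hp).2
      have h3 := (Stmt9.lastArgmax_spec i j M.1).2 0 (Finset.mem_range.mpr (by omega))
      omega
    exact Fintype.card_lt_of_injective_of_notMem φ hinj hNoImg
end
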